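/- arXiv:2503.17463 — 6 statements merged into one kernel-verified Lean document; each statement's English description precedes it below -/
import Mathlib

section
/- Let d, m ≥ 1, let Ω₀, Ω ⊆ ℝ^d be open, and let 𝒢 : Ω₀ → Ω be a C² bijection whose Jacobian matrix G_𝒢(X) = ∇₀𝒢(X) is invertible at every X ∈ Ω₀. Let f : ℝ^m × ℝ^{m×d} → ℝ^{m×d} and s : ℝ^m × ℝ^{m×d} → ℝ^m be C¹, and let q : Ω → ℝ^m be C². Define Q = q ∘ 𝒢 on Ω₀. Then the following are equivalent: (i) for every x ∈ Ω, the row-wise divergence of x ↦ f(q(x), ∇q(x)) equals s(q(x), ∇q(x)); (ii) for every X ∈ Ω₀, the row-wise divergence (with respect to X) of the transformed flux X ↦ det(G_𝒢(X)) · f(Q(X), ∇₀Q(X)·G_𝒢(X)⁻¹) · G_𝒢(X)⁻ᵀ equals det(G_𝒢(X)) · s(Q(X), ∇₀Q(X)·G_𝒢(X)⁻¹). -/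
/-- The Jacobian matrix of a map `f : ℝ^d → ℝ^m` at a point `x`,
with entries `[∇f(x)]_{ij} = ∂f_i/∂x_j`. -/
noncomputable def jacobianMatrix {d m : ℕ} (f : (Fin d → ℝ) → (Fin m → ℝ))
    (x : Fin d → ℝ) : Matrix (Fin m) (Fin d) ℝ :=
  Matrix.of fun i j => fderiv ℝ (fun y => f y i) x (Pi.single j 1)

open scoped BigOperators

section Aux

variable {d : ℕ}

/-- determinant as a continuous multilinear map in the rows -/
noncomputable def detCMM (d : ℕ) :
    ContinuousMultilinearMap ℝ (fun _ : Fin d => (Fin d → ℝ)) ℝ :=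
  (Matrix.detRowAlternating : ((Fin d → ℝ) [⋀^Fin d]→ₗ[ℝ] ℝ)).toMultilinearMap.mkContinuous
    (Nat.factorial d) (by
      intro v
      show ‖Matrix.detRowAlternating v‖ ≤ _
      have h0 : Matrix.detRowAlternating v = (Matrix.of v).det := rfl
      rw [h0, Matrix.det_apply]
      refine le_trans (norm_sum_le _ _) ?_
      have hb : ∀ σ : Equiv.Perm (Fin d),
          ‖Equiv.Perm.sign σ • ∏ i, Matrix.of v (σ i) i‖ ≤ ∏ i, ‖v i‖ := by
        intro σ
        have h1 : ‖Equiv.Perm.sign σ • ∏ i, Matrix.of v (σ i) i‖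
            = ‖∏ i, Matrix.of v (σ i) i‖ := by
          rcases Int.units_eq_one_or (Equiv.Perm.sign σ) with h | h <;>
            rw [h] <;> simp [Units.smul_def]
        rw [h1]
        calc ‖∏ i, Matrix.of v (σ i) i‖ = ∏ i, ‖v (σ i) i‖ := by
              simp [Real.norm_eq_abs, Finset.abs_prod]
          _ ≤ ∏ i, ‖v (σ i)‖ :=
              Finset.prod_le_prod (fun _ _ => norm_nonneg _)
                (fun i _ => norm_le_pi_norm (v (σ i)) i)
          _ = ∏ i, ‖v i‖ := Equiv.prod_comp σ (fun i => ‖v i‖)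
      refine le_trans (Finset.sum_le_sum (fun σ _ => hb σ)) ?_
      simp [Finset.sum_const, Fintype.card_perm]
      )

theorem detCMM_apply (v : Fin d → (Fin d → ℝ)) : detCMM d v = (Matrix.of v).det := rfl

theorem det_updateRow_eq (A : Matrix (Fin d) (Fin d) ℝ) (p : Fin d) (w : Fin d → ℝ) :
    (A.updateRow p w).det = ∑ q, w q * A.adjugate q p := by
  have hw : w = ∑ q : Fin d, w q • (Pi.single q (1:ℝ) : Fin d → ℝ) := by
    ext b; simp [Pi.single_apply]
  calc (A.updateRow p w).det
      = (A.updateRow p (∑ q : Fin d, w q • (Pi.single q (1:ℝ) : Fin d → ℝ))).det := by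
        rw [← hw]
    _ = ∑ q, w q * A.adjugate q p := by
        rw [show (A.updateRow p (∑ q : Fin d, w q • (Pi.single q (1:ℝ) : Fin d → ℝ))).det
            = Matrix.detRowAlternating
                (Function.update (fun i => A i) p (∑ q : Fin d, w q • (Pi.single q (1:ℝ) : Fin d → ℝ))) from rfl]
        rw [AlternatingMap.map_update_sum]
        refine Finset.sum_congr rfl (fun q _ => ?_)
        rw [AlternatingMap.map_update_smul]
        rw [Matrix.adjugate_apply]
        rfl

theorem hasFDerivAt_det {M : (Fin d → ℝ) → Matrix (Fin d) (Fin d) ℝ}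
    {M' : Fin d → Fin d → (Fin d → ℝ) →L[ℝ] ℝ} {X₀ : Fin d → ℝ}
    (hM : ∀ p q, HasFDerivAt (fun X => M X p q) (M' p q) X₀) :
    HasFDerivAt (fun X => (M X).det)
      (∑ p, ∑ q, (M X₀).adjugate q p • M' p q) X₀ := by
  have h := HasFDerivAt.multilinear_comp (detCMM d) (g := fun p X => M X p)
      (g' := fun p => ContinuousLinearMap.pi (fun q => M' p q)) (x := X₀)
      (fun p => hasFDerivAt_pi.2 (fun q => hM p q))
  have he : (fun X => (M X).det) = (fun X => detCMM d (fun p => M X p)) := by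
    funext X; rw [detCMM_apply]; rfl
  rw [he]
  refine h.congr_fderiv (Eq.symm ?_)
  ext v
  simp only [ContinuousLinearMap.sum_apply, ContinuousLinearMap.smul_apply,
    ContinuousLinearMap.comp_apply, ContinuousMultilinearMap.toContinuousLinearMap_apply,
    ContinuousLinearMap.pi_apply]
  refine Finset.sum_congr rfl (fun p _ => ?_)
  have : (detCMM d) (Function.update (fun j => M X₀ j) p ((ContinuousLinearMap.pi fun q => M' p q) v))
      = ((M X₀).updateRow p (fun q => M' p q v)).det := by
    rw [detCMM_apply]; rfl
  rw [this, det_updateRow_eq]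
  exact Finset.sum_congr rfl (fun q _ => by simp [mul_comm])

theorem differentiableAt_det {M : (Fin d → ℝ) → Matrix (Fin d) (Fin d) ℝ} {X₀ : Fin d → ℝ}
    (hM : ∀ p q, DifferentiableAt ℝ (fun X => M X p q) X₀) :
    DifferentiableAt ℝ (fun X => (M X).det) X₀ :=
  (hasFDerivAt_det (fun p q => (hM p q).hasFDerivAt)).differentiableAt

theorem fderiv_det_apply {M : (Fin d → ℝ) → Matrix (Fin d) (Fin d) ℝ} {X₀ : Fin d → ℝ}
    (hM : ∀ p q, DifferentiableAt ℝ (fun X => M X p q) X₀) (v : Fin d → ℝ) :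
    fderiv ℝ (fun X => (M X).det) X₀ v
      = ∑ p, ∑ q, fderiv ℝ (fun X => M X p q) X₀ v * (M X₀).adjugate q p := by
  rw [(hasFDerivAt_det (fun p q => (hM p q).hasFDerivAt)).fderiv]
  simp [ContinuousLinearMap.sum_apply, mul_comm]

theorem differentiableAt_adjugate_entry {M : (Fin d → ℝ) → Matrix (Fin d) (Fin d) ℝ}
    {X₀ : Fin d → ℝ} (hM : ∀ p q, DifferentiableAt ℝ (fun X => M X p q) X₀) (j k : Fin d) :
    DifferentiableAt ℝ (fun X => (M X).adjugate j k) X₀ := by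
  have he : (fun X => (M X).adjugate j k)
      = fun X => ((M X).updateRow k (Pi.single j 1)).det := by
    funext X; rw [Matrix.adjugate_apply]
  rw [he]
  apply differentiableAt_det
  intro p q
  rcases eq_or_ne p k with rfl | hp
  · simp only [Matrix.updateRow_apply, if_pos rfl]
    exact differentiableAt_const _
  · simp only [Matrix.updateRow_apply, if_neg hp]
    exact hM p q

theorem inv_entry_eq (A : Matrix (Fin d) (Fin d) ℝ) (j k : Fin d) :
    A⁻¹ j k = (A.det)⁻¹ * A.adjugate j k := by
  rw [Matrix.inv_def]
  simp [Ring.inverse_eq_inv', Matrix.smul_apply, smul_eq_mul]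

theorem differentiableAt_inv_entry {M : (Fin d → ℝ) → Matrix (Fin d) (Fin d) ℝ}
    {X₀ : Fin d → ℝ} (hM : ∀ p q, DifferentiableAt ℝ (fun X => M X p q) X₀)
    (hdet : (M X₀).det ≠ 0) (j k : Fin d) :
    DifferentiableAt ℝ (fun X => (M X)⁻¹ j k) X₀ := by
  have he : (fun X => (M X)⁻¹ j k)
      = fun X => ((M X).det)⁻¹ * (M X).adjugate j k := by
    funext X; exact inv_entry_eq _ _ _
  rw [he]
  exact ((differentiableAt_det hM).inv hdet).mul (differentiableAt_adjugate_entry hM j k)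

theorem fderiv_eval_vec (h : (Fin d → ℝ) → ℝ) (x : Fin d → ℝ) (w : Fin d → ℝ) :
    fderiv ℝ h x w = ∑ l, w l * fderiv ℝ h x (Pi.single l 1) := by
  have hw : w = ∑ l : Fin d, w l • (Pi.single l (1:ℝ) : Fin d → ℝ) := by
    ext b; simp [Pi.single_apply]
  conv_lhs => rw [hw]
  rw [map_sum]
  exact Finset.sum_congr rfl (fun l _ => by rw [map_smul]; simp)

theorem contDiffAt_jacobian_entry {m : ℕ} {g : (Fin d → ℝ) → (Fin m → ℝ)}
    {U : Set (Fin d → ℝ)} (hU : IsOpen U) {X₀ : Fin d → ℝ} (hX₀ : X₀ ∈ U)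
    (hg : ContDiffOn ℝ 2 g U) (p : Fin m) (q : Fin d) :
    ContDiffAt ℝ 1 (fun X => jacobianMatrix g X p q) X₀ := by
  have hgp : ContDiffAt ℝ 2 (fun X => g X p) X₀ := by
    have h1 := hg.contDiffAt (hU.mem_nhds hX₀)
    exact (ContinuousLinearMap.proj (R := ℝ) (φ := fun _ : Fin m => ℝ) p).contDiff.comp_contDiffAt _ h1
  have h2 : ContDiffAt ℝ 1 (fderiv ℝ (fun X => g X p)) X₀ :=
    hgp.fderiv_right (by norm_num)
  exact (ContinuousLinearMap.apply ℝ ℝ (Pi.single q 1)).contDiff.comp_contDiffAt _ h2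

theorem fderiv_fderiv_symm {φ : (Fin d → ℝ) → ℝ} {X₀ : Fin d → ℝ}
    (hφ : ContDiffAt ℝ 2 φ X₀) (v w : Fin d → ℝ) :
    fderiv ℝ (fun X => fderiv ℝ φ X v) X₀ w = fderiv ℝ (fun X => fderiv ℝ φ X w) X₀ v := by
  have hdiff : DifferentiableAt ℝ (fderiv ℝ φ) X₀ :=
    (hφ.fderiv_right (m := 1) (by norm_num)).differentiableAt one_ne_zero
  have heval : ∀ u z : Fin d → ℝ,
      fderiv ℝ (fun X => fderiv ℝ φ X u) X₀ z = fderiv ℝ (fderiv ℝ φ) X₀ z u := by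
    intro u z
    rw [fderiv_clm_apply hdiff (differentiableAt_const u)]
    simp
  rw [heval, heval]
  exact hφ.isSymmSndFDerivAt (by simp) w v

theorem fderiv_mul_apply {c e : (Fin d → ℝ) → ℝ} {x v : Fin d → ℝ}
    (hc : DifferentiableAt ℝ c x) (he : DifferentiableAt ℝ e x) :
    fderiv ℝ (fun y => c y * e y) x v = c x * fderiv ℝ e x v + e x * fderiv ℝ c x v := by
  rw [fderiv_fun_mul hc he]; simp

theorem fderiv_comp_single {𝒢 : (Fin d → ℝ) → (Fin d → ℝ)} {h : (Fin d → ℝ) → ℝ}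
    {X₀ : Fin d → ℝ} (h𝒢 : DifferentiableAt ℝ 𝒢 X₀) (hh : DifferentiableAt ℝ h (𝒢 X₀))
    (j : Fin d) :
    fderiv ℝ (fun X => h (𝒢 X)) X₀ (Pi.single j 1)
      = ∑ l, fderiv ℝ h (𝒢 X₀) (Pi.single l 1) * jacobianMatrix 𝒢 X₀ l j := by
  have hcomp : fderiv ℝ (fun X => h (𝒢 X)) X₀ (Pi.single j 1)
      = fderiv ℝ h (𝒢 X₀) (fderiv ℝ 𝒢 X₀ (Pi.single j 1)) := by
    rw [fderiv_comp' X₀ hh h𝒢]; rfl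
  have hcompo : ∀ l, (fderiv ℝ 𝒢 X₀ (Pi.single j 1)) l = jacobianMatrix 𝒢 X₀ l j := by
    intro l
    have h1 : fderiv ℝ (fun X => 𝒢 X l) X₀
        = (ContinuousLinearMap.proj (R := ℝ) (φ := fun _ : Fin d => ℝ) l).comp
            (fderiv ℝ 𝒢 X₀) :=
      ((ContinuousLinearMap.proj (R := ℝ) (φ := fun _ : Fin d => ℝ) l).hasFDerivAt.comp X₀
        h𝒢.hasFDerivAt).fderiv
    have : jacobianMatrix 𝒢 X₀ l j = fderiv ℝ (fun X => 𝒢 X l) X₀ (Pi.single j 1) := rfl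
    rw [this, h1]; rfl
  rw [hcomp, fderiv_eval_vec]
  exact Finset.sum_congr rfl fun l _ => by rw [hcompo l, mul_comm]

theorem piola {U : Set (Fin d → ℝ)} (hU : IsOpen U) {X₀ : Fin d → ℝ} (hX₀ : X₀ ∈ U)
    {𝒢 : (Fin d → ℝ) → (Fin d → ℝ)} (h𝒢 : ContDiffOn ℝ 2 𝒢 U)
    (hGinv : ∀ X ∈ U, IsUnit (jacobianMatrix 𝒢 X)) (k : Fin d) :
    ∑ j, fderiv ℝ (fun X => (jacobianMatrix 𝒢 X).adjugate j k) X₀ (Pi.single j 1) = 0 := by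
  set G : (Fin d → ℝ) → Matrix (Fin d) (Fin d) ℝ := fun X => jacobianMatrix 𝒢 X with hG
  have hdG : ∀ Y ∈ U, ∀ p q : Fin d, DifferentiableAt ℝ (fun X => G X p q) Y := fun Y hY p q =>
    (contDiffAt_jacobian_entry hU hY h𝒢 p q).differentiableAt one_ne_zero
  have hdet : ∀ Y ∈ U, (G Y).det ≠ 0 := fun Y hY => by
    have := (Matrix.isUnit_iff_isUnit_det _).1 (hGinv Y hY)
    exact this.ne_zero
  have hdetX₀ : (G X₀).det ≠ 0 := hdet X₀ hX₀
  set B : Matrix (Fin d) (Fin d) ℝ := (G X₀)⁻¹ with hB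
  set gd : ℝ := (G X₀).det with hgd
  set H : Fin d → Fin d → Fin d → ℝ :=
    fun p q a => fderiv ℝ (fun X => G X p q) X₀ (Pi.single a 1) with hH
  -- symmetry of second derivatives
  have hsym : ∀ p q a, H p q a = H p a q := by
    intro p q a
    have hφ : ContDiffAt ℝ 2 (fun X => 𝒢 X p) X₀ := by
      have h1 := h𝒢.contDiffAt (hU.mem_nhds hX₀)
      exact (ContinuousLinearMap.proj (R := ℝ) (φ := fun _ : Fin d => ℝ) p).contDiff.comp_contDiffAt
        _ h1
    exact fderiv_fderiv_symm hφ _ _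
  -- adjugate = det * inverse as functions on U
  have hadj_inv : ∀ Y ∈ U, ∀ j k' : Fin d, (G Y).adjugate j k' = (G Y).det * (G Y)⁻¹ j k' := by
    intro Y hY j k'
    rw [inv_entry_eq]
    field_simp [hdet Y hY]
  -- derivative of det
  have hDdet : ∀ a, fderiv ℝ (fun X => (G X).det) X₀ (Pi.single a 1)
      = ∑ p, ∑ q, H p q a * (gd * B q p) := by
    intro a
    rw [fderiv_det_apply (fun p q => hdG X₀ hX₀ p q)]
    refine Finset.sum_congr rfl fun p _ => Finset.sum_congr rfl fun q _ => ?_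
    rw [hadj_inv X₀ hX₀ q p]
  -- derivative of the inverse
  have hDinv : ∀ r k' a, fderiv ℝ (fun X => (G X)⁻¹ r k') X₀ (Pi.single a 1)
      = -∑ j, ∑ p, B r j * H j p a * B p k' := by
    intro r k' a
    -- the defining identity (G X * (G X)⁻¹) = 1 on U
    have hrow : ∀ j : Fin d,
        ∑ p, (G X₀ j p * fderiv ℝ (fun X => (G X)⁻¹ p k') X₀ (Pi.single a 1)
          + B p k' * H j p a) = 0 := by
      intro j
      have hev : (fun X => ∑ p, G X j p * (G X)⁻¹ p k')
          =ᶠ[nhds X₀] (fun _ => if j = k' then (1:ℝ) else 0) := by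
        filter_upwards [hU.mem_nhds hX₀] with Y hY
        have h1 : (G Y * (G Y)⁻¹) = 1 :=
          Matrix.mul_nonsing_inv _ ((Matrix.isUnit_iff_isUnit_det _).1 (hGinv Y hY))
        have h2 := congrArg (fun A => A j k') h1
        simpa [Matrix.mul_apply, Matrix.one_apply] using h2
      have h0 : fderiv ℝ (fun X => ∑ p, G X j p * (G X)⁻¹ p k') X₀ (Pi.single a 1) = 0 := by
        rw [hev.fderiv_eq]; simp
      rw [fderiv_fun_sum (fun p _ => ((hdG X₀ hX₀ j p).fun_mul
        (differentiableAt_inv_entry (hdG X₀ hX₀) hdetX₀ p k')))] at h0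
      simp only [ContinuousLinearMap.sum_apply] at h0
      rw [← h0]
      refine Finset.sum_congr rfl fun p _ => ?_
      rw [fderiv_mul_apply (hdG X₀ hX₀ j p)
        (differentiableAt_inv_entry (hdG X₀ hX₀) hdetX₀ p k')]
    -- multiply by B on the left
    have hBG : ∀ r' p : Fin d, (∑ j, B r' j * G X₀ j p) = if r' = p then 1 else 0 := by
      intro r' p
      have h1 : ((G X₀)⁻¹ * G X₀) = 1 :=
        Matrix.nonsing_inv_mul _ ((Matrix.isUnit_iff_isUnit_det _).1 (hGinv X₀ hX₀))
      have h2 := congrArg (fun A => A r' p) h1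
      simpa [Matrix.mul_apply, Matrix.one_apply] using h2
    have key : ∑ j, B r j * (∑ p, (G X₀ j p * fderiv ℝ (fun X => (G X)⁻¹ p k') X₀ (Pi.single a 1)
          + B p k' * H j p a)) = 0 := by
      simp [hrow]
    calc fderiv ℝ (fun X => (G X)⁻¹ r k') X₀ (Pi.single a 1)
        = ∑ p, (if r = p then (1:ℝ) else 0) * fderiv ℝ (fun X => (G X)⁻¹ p k') X₀
            (Pi.single a 1) := by simp
      _ = ∑ p, (∑ j, B r j * G X₀ j p) * fderiv ℝ (fun X => (G X)⁻¹ p k') X₀ (Pi.single a 1) := by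
          refine Finset.sum_congr rfl fun p _ => ?_; rw [hBG]
      _ = ∑ j, B r j * ∑ p, G X₀ j p * fderiv ℝ (fun X => (G X)⁻¹ p k') X₀ (Pi.single a 1) := by
          simp only [Finset.sum_mul]
          rw [Finset.sum_comm]
          simp [Finset.mul_sum, mul_assoc]
      _ = -∑ j, ∑ p, B r j * H j p a * B p k' := by
          have hsplit : ∀ j, ∑ p, G X₀ j p * fderiv ℝ (fun X => (G X)⁻¹ p k') X₀ (Pi.single a 1)
              = -∑ p, B p k' * H j p a := by
            intro j
            have := hrow j
            rw [Finset.sum_add_distrib] at this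
            linarith [this]
          rw [Finset.sum_congr rfl fun j _ => by rw [hsplit j]]
          rw [← Finset.sum_neg_distrib]
          refine Finset.sum_congr rfl fun j _ => ?_
          rw [mul_neg]
          refine congrArg Neg.neg ?_
          rw [Finset.mul_sum]
          exact Finset.sum_congr rfl fun p _ => by ring
  -- reorder lemma for triple sums
  have reorder : ∀ Φ : Fin d → Fin d → Fin d → ℝ,
      (∑ j, ∑ p, ∑ q, Φ j p q) = ∑ j, ∑ p, ∑ q, Φ q p j := by
    intro Φ
    calc (∑ j, ∑ p, ∑ q, Φ j p q) = ∑ p, ∑ j, ∑ q, Φ j p q := Finset.sum_comm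
      _ = ∑ p, ∑ q, ∑ j, Φ j p q := Finset.sum_congr rfl fun p _ => Finset.sum_comm
      _ = ∑ q, ∑ p, ∑ j, Φ j p q := Finset.sum_comm
  -- each term of the divergence
  have hterm2 : ∀ j, fderiv ℝ (fun X => (G X).adjugate j k) X₀ (Pi.single j 1)
      = gd * (-∑ p, ∑ q, B j p * H p q j * B q k)
        + B j k * (∑ p, ∑ q, H p q j * (gd * B q p)) := by
    intro j
    have hev : (fun X => (G X).adjugate j k) =ᶠ[nhds X₀] (fun X => (G X).det * (G X)⁻¹ j k) := by
      filter_upwards [hU.mem_nhds hX₀] with Y hY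
      exact hadj_inv Y hY j k
    rw [hev.fderiv_eq, fderiv_mul_apply (differentiableAt_det (hdG X₀ hX₀))
      (differentiableAt_inv_entry (hdG X₀ hX₀) hdetX₀ j k), hDinv j k j, hDdet j]
  show ∑ j, fderiv ℝ (fun X => (G X).adjugate j k) X₀ (Pi.single j 1) = 0
  rw [Finset.sum_congr rfl fun j _ => hterm2 j, Finset.sum_add_distrib]
  have e1 : ∑ j, gd * (-∑ p, ∑ q, B j p * H p q j * B q k)
      = -∑ j, ∑ p, ∑ q, gd * (B j p * H p q j * B q k) := by
    rw [← Finset.sum_neg_distrib]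
    refine Finset.sum_congr rfl fun j _ => ?_
    rw [mul_neg]
    refine congrArg Neg.neg ?_
    rw [Finset.mul_sum]
    refine Finset.sum_congr rfl fun p _ => ?_
    rw [Finset.mul_sum]
  have e2 : ∑ j, B j k * (∑ p, ∑ q, H p q j * (gd * B q p))
      = ∑ j, ∑ p, ∑ q, gd * (B q p * H p q j * B j k) := by
    refine Finset.sum_congr rfl fun j _ => ?_
    rw [Finset.mul_sum]
    refine Finset.sum_congr rfl fun p _ => ?_
    rw [Finset.mul_sum]
    exact Finset.sum_congr rfl fun q _ => by ring
  rw [e1, e2]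
  have e3 : ∑ j, ∑ p, ∑ q, gd * (B q p * H p q j * B j k)
      = ∑ j, ∑ p, ∑ q, gd * (B j p * H p q j * B q k) := by
    rw [reorder (fun j p q => gd * (B q p * H p q j * B j k))]
    refine Finset.sum_congr rfl fun j _ => Finset.sum_congr rfl fun p _ =>
      Finset.sum_congr rfl fun q _ => ?_
    rw [← hsym p q j]
  rw [e3]
  exact neg_add_cancel _

end Aux

/-- **Equivalence of a system of conservation laws and its transformed counterpart
on a fixed reference domain.**  `q` solves `∇·f(q,∇q) = s(q,∇q)` on the physical
domain `Ω` if and only if `Q = q ∘ 𝒢` solves the transformed conservation law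
`∇₀·F(Q,∇₀Q) = S(Q,∇₀Q)` on the reference domain `Ω₀`, where
`F = g_𝒢 f(Q, ∇₀Q·G_𝒢⁻¹) G_𝒢⁻ᵀ` and `S = g_𝒢 s(Q, ∇₀Q·G_𝒢⁻¹)`. -/
theorem transformed_conservation_law_equivalence (d m : ℕ) (hd : 1 ≤ d) (hm : 1 ≤ m)
    (Ω₀ Ω : Set (Fin d → ℝ)) (hΩ₀ : IsOpen Ω₀) (hΩ : IsOpen Ω)
    (𝒢 : (Fin d → ℝ) → (Fin d → ℝ)) (h𝒢 : ContDiffOn ℝ 2 𝒢 Ω₀)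
    (h𝒢bij : Set.BijOn 𝒢 Ω₀ Ω)
    (hGinv : ∀ X ∈ Ω₀, IsUnit (jacobianMatrix 𝒢 X))
    (f : (Fin m → ℝ) → (Fin m → Fin d → ℝ) → Fin m → Fin d → ℝ)
    (s : (Fin m → ℝ) → (Fin m → Fin d → ℝ) → Fin m → ℝ)
    (hf : ContDiff ℝ 1 (fun p : (Fin m → ℝ) × (Fin m → Fin d → ℝ) => f p.1 p.2))
    (hs : ContDiff ℝ 1 (fun p : (Fin m → ℝ) × (Fin m → Fin d → ℝ) => s p.1 p.2))
    (q : (Fin d → ℝ) → Fin m → ℝ) (hq : ContDiffOn ℝ 2 q Ω)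
    (Q : (Fin d → ℝ) → Fin m → ℝ) (hQ : Q = q ∘ 𝒢) :
    -- (i) the conservation law holds on the physical domain Ω
    (∀ x ∈ Ω, ∀ i : Fin m,
        ∑ j : Fin d,
          fderiv ℝ (fun y => f (q y) (fun a b => jacobianMatrix q y a b) i j) x
            (Pi.single j 1) =
          s (q x) (fun a b => jacobianMatrix q x a b) i) ↔
    -- (ii) the transformed conservation law holds on the reference domain Ω₀
    (∀ X ∈ Ω₀, ∀ i : Fin m,
        ∑ j : Fin d,
          fderiv ℝ
            (fun Y => (jacobianMatrix 𝒢 Y).det *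
              ∑ k : Fin d,
                f (Q Y)
                  (fun a b => ∑ l : Fin d,
                    jacobianMatrix Q Y a l * (jacobianMatrix 𝒢 Y)⁻¹ l b) i k *
                  (jacobianMatrix 𝒢 Y)⁻¹ j k)
            X (Pi.single j 1) =
          (jacobianMatrix 𝒢 X).det *
            s (Q X)
              (fun a b => ∑ l : Fin d,
                jacobianMatrix Q X a l * (jacobianMatrix 𝒢 X)⁻¹ l b) i) := by
  subst hQ
  -- basic differentiability facts
  have h𝒢d : ∀ Y ∈ Ω₀, DifferentiableAt ℝ 𝒢 Y := fun Y hY =>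
    (h𝒢.contDiffAt (hΩ₀.mem_nhds hY)).differentiableAt (by norm_num)
  have hGd : ∀ Y ∈ Ω₀, ∀ (p : Fin d) (q' : Fin d),
      DifferentiableAt ℝ (fun X => jacobianMatrix 𝒢 X p q') Y := fun Y hY p q' =>
    (contDiffAt_jacobian_entry hΩ₀ hY h𝒢 p q').differentiableAt one_ne_zero
  have hdet : ∀ Y ∈ Ω₀, (jacobianMatrix 𝒢 Y).det ≠ 0 := fun Y hY =>
    ((Matrix.isUnit_iff_isUnit_det _).1 (hGinv Y hY)).ne_zero
  have hqd : ∀ x ∈ Ω, ∀ a : Fin m, DifferentiableAt ℝ (fun y => q y a) x := fun x hx a =>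
    ((ContinuousLinearMap.proj (R := ℝ) (φ := fun _ : Fin m => ℝ) a).contDiff.comp_contDiffAt
      _ (hq.contDiffAt (hΩ.mem_nhds hx))).differentiableAt (by norm_num)
  -- differentiability of the physical flux
  have hFd : ∀ x ∈ Ω, ∀ (i : Fin m) (k : Fin d),
      DifferentiableAt ℝ (fun y => f (q y) (fun a b => jacobianMatrix q y a b) i k) x := by
    intro x hx i k
    have hpair : ContDiffAt ℝ 1 (fun y =>
        ((q y, fun a b => jacobianMatrix q y a b) : (Fin m → ℝ) × (Fin m → Fin d → ℝ))) x := by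
      refine ContDiffAt.prodMk ?_ ?_
      · exact (hq.contDiffAt (hΩ.mem_nhds hx)).of_le (by norm_num)
      · exact contDiffAt_pi.2 fun a => contDiffAt_pi.2 fun b =>
          contDiffAt_jacobian_entry hΩ hx hq a b
    have hfik : ContDiff ℝ 1 (fun p : (Fin m → ℝ) × (Fin m → Fin d → ℝ) => f p.1 p.2 i k) :=
      contDiff_pi.1 (contDiff_pi.1 hf i) k
    exact (hfik.comp_contDiffAt _ hpair).differentiableAt one_ne_zero
  -- chain rule for the jacobian of Q = q ∘ 𝒢
  have hJQ : ∀ Y ∈ Ω₀, ∀ (a : Fin m) (l : Fin d),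
      jacobianMatrix (q ∘ 𝒢) Y a l
        = ∑ c, jacobianMatrix q (𝒢 Y) a c * jacobianMatrix 𝒢 Y c l := by
    intro Y hY a l
    exact fderiv_comp_single (h := fun y => q y a) (h𝒢d Y hY)
      (hqd (𝒢 Y) (h𝒢bij.mapsTo hY) a) l
  have hGB : ∀ Y ∈ Ω₀, ∀ c b : Fin d,
      (∑ l, jacobianMatrix 𝒢 Y c l * (jacobianMatrix 𝒢 Y)⁻¹ l b)
        = if c = b then 1 else 0 := by
    intro Y hY c b
    have h1 : (jacobianMatrix 𝒢 Y * (jacobianMatrix 𝒢 Y)⁻¹) = 1 :=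
      Matrix.mul_nonsing_inv _ ((Matrix.isUnit_iff_isUnit_det _).1 (hGinv Y hY))
    have h2 := congrArg (fun A => A c b) h1
    simpa [Matrix.mul_apply, Matrix.one_apply] using h2
  have hcomb : ∀ Y ∈ Ω₀, ∀ (a : Fin m) (b : Fin d),
      (∑ l, jacobianMatrix (q ∘ 𝒢) Y a l * (jacobianMatrix 𝒢 Y)⁻¹ l b)
        = jacobianMatrix q (𝒢 Y) a b := by
    intro Y hY a b
    calc ∑ l, jacobianMatrix (q ∘ 𝒢) Y a l * (jacobianMatrix 𝒢 Y)⁻¹ l b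
        = ∑ l, (∑ c, jacobianMatrix q (𝒢 Y) a c * jacobianMatrix 𝒢 Y c l)
            * (jacobianMatrix 𝒢 Y)⁻¹ l b :=
          Finset.sum_congr rfl fun l _ => by rw [hJQ Y hY a l]
      _ = ∑ c, jacobianMatrix q (𝒢 Y) a c
            * ∑ l, jacobianMatrix 𝒢 Y c l * (jacobianMatrix 𝒢 Y)⁻¹ l b := by
          simp only [Finset.sum_mul]
          rw [Finset.sum_comm]
          simp [Finset.mul_sum, mul_assoc]
      _ = jacobianMatrix q (𝒢 Y) a b := by
          simp only [hGB Y hY, mul_ite, mul_one, mul_zero, Finset.sum_ite_eq',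
            Finset.mem_univ, if_true]
  have hadj : ∀ Y ∈ Ω₀, ∀ j k : Fin d,
      (jacobianMatrix 𝒢 Y).det * (jacobianMatrix 𝒢 Y)⁻¹ j k
        = (jacobianMatrix 𝒢 Y).adjugate j k := by
    intro Y hY j k
    rw [inv_entry_eq]
    field_simp [hdet Y hY]
  -- the transformed flux agrees with the adjugate form on Ω₀
  have hflux : ∀ (i : Fin m) (j : Fin d), ∀ Y ∈ Ω₀,
      (jacobianMatrix 𝒢 Y).det *
          ∑ k : Fin d, f ((q ∘ 𝒢) Y)
            (fun a b => ∑ l : Fin d,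
              jacobianMatrix (q ∘ 𝒢) Y a l * (jacobianMatrix 𝒢 Y)⁻¹ l b) i k *
            (jacobianMatrix 𝒢 Y)⁻¹ j k
        = ∑ k : Fin d, f (q (𝒢 Y)) (fun a b => jacobianMatrix q (𝒢 Y) a b) i k *
            (jacobianMatrix 𝒢 Y).adjugate j k := by
    intro i j Y hY
    rw [Finset.mul_sum]
    refine Finset.sum_congr rfl fun k _ => ?_
    have harg : (fun a b => ∑ l : Fin d,
        jacobianMatrix (q ∘ 𝒢) Y a l * (jacobianMatrix 𝒢 Y)⁻¹ l b)
        = (fun a b => jacobianMatrix q (𝒢 Y) a b) := by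
      funext a b; exact hcomb Y hY a b
    rw [harg, ← hadj Y hY j k]
    simp only [Function.comp_apply]
    ring
  -- key computation for the left-hand side of (ii)
  have hkey : ∀ X ∈ Ω₀, ∀ i : Fin m,
      (∑ j : Fin d, fderiv ℝ
        (fun Y => (jacobianMatrix 𝒢 Y).det *
          ∑ k : Fin d, f ((q ∘ 𝒢) Y)
            (fun a b => ∑ l : Fin d,
              jacobianMatrix (q ∘ 𝒢) Y a l * (jacobianMatrix 𝒢 Y)⁻¹ l b) i k *
            (jacobianMatrix 𝒢 Y)⁻¹ j k) X (Pi.single j 1))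
      = (jacobianMatrix 𝒢 X).det *
          ∑ k, fderiv ℝ (fun y => f (q y) (fun a b => jacobianMatrix q y a b) i k)
            (𝒢 X) (Pi.single k 1) := by
    intro X hX i
    have hmem : 𝒢 X ∈ Ω := h𝒢bij.mapsTo hX
    -- replace the integrand by the adjugate form
    have hstep1 : ∀ j : Fin d, fderiv ℝ
        (fun Y => (jacobianMatrix 𝒢 Y).det *
          ∑ k : Fin d, f ((q ∘ 𝒢) Y)
            (fun a b => ∑ l : Fin d,
              jacobianMatrix (q ∘ 𝒢) Y a l * (jacobianMatrix 𝒢 Y)⁻¹ l b) i k *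
            (jacobianMatrix 𝒢 Y)⁻¹ j k) X (Pi.single j 1)
        = fderiv ℝ (fun Y => ∑ k : Fin d,
            f (q (𝒢 Y)) (fun a b => jacobianMatrix q (𝒢 Y) a b) i k *
            (jacobianMatrix 𝒢 Y).adjugate j k) X (Pi.single j 1) := by
      intro j
      have hev : (fun Y => (jacobianMatrix 𝒢 Y).det *
          ∑ k : Fin d, f ((q ∘ 𝒢) Y)
            (fun a b => ∑ l : Fin d,
              jacobianMatrix (q ∘ 𝒢) Y a l * (jacobianMatrix 𝒢 Y)⁻¹ l b) i k *
            (jacobianMatrix 𝒢 Y)⁻¹ j k)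
          =ᶠ[nhds X] (fun Y => ∑ k : Fin d,
            f (q (𝒢 Y)) (fun a b => jacobianMatrix q (𝒢 Y) a b) i k *
            (jacobianMatrix 𝒢 Y).adjugate j k) := by
        filter_upwards [hΩ₀.mem_nhds hX] with Y hY
        exact hflux i j Y hY
      rw [hev.fderiv_eq]
    -- differentiability of the pieces
    have hFcd : ∀ k : Fin d, DifferentiableAt ℝ
        (fun Y => f (q (𝒢 Y)) (fun a b => jacobianMatrix q (𝒢 Y) a b) i k) X :=
      fun k => DifferentiableAt.comp X (hFd (𝒢 X) hmem i k) (h𝒢d X hX)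
    have hadjd : ∀ j k : Fin d, DifferentiableAt ℝ
        (fun Y => (jacobianMatrix 𝒢 Y).adjugate j k) X :=
      fun j k => differentiableAt_adjugate_entry (hGd X hX) j k
    -- expand the divergence
    have hstep2 : ∀ j : Fin d, fderiv ℝ (fun Y => ∑ k : Fin d,
          f (q (𝒢 Y)) (fun a b => jacobianMatrix q (𝒢 Y) a b) i k *
          (jacobianMatrix 𝒢 Y).adjugate j k) X (Pi.single j 1)
        = ∑ k : Fin d,
          (f (q (𝒢 X)) (fun a b => jacobianMatrix q (𝒢 X) a b) i k *
            fderiv ℝ (fun Y => (jacobianMatrix 𝒢 Y).adjugate j k) X (Pi.single j 1)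
          + (jacobianMatrix 𝒢 X).adjugate j k *
            fderiv ℝ (fun Y =>
              f (q (𝒢 Y)) (fun a b => jacobianMatrix q (𝒢 Y) a b) i k) X (Pi.single j 1)) := by
      intro j
      rw [fderiv_fun_sum (fun k _ => (hFcd k).fun_mul (hadjd j k))]
      rw [ContinuousLinearMap.sum_apply]
      exact Finset.sum_congr rfl fun k _ => fderiv_mul_apply (hFcd k) (hadjd j k)
    rw [Finset.sum_congr rfl fun j _ => (hstep1 j).trans (hstep2 j)]
    rw [Finset.sum_congr rfl fun j _ => Finset.sum_add_distrib, Finset.sum_add_distrib]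
    -- first part vanishes by the Piola identity
    have hS1 : (∑ j : Fin d, ∑ k : Fin d,
        f (q (𝒢 X)) (fun a b => jacobianMatrix q (𝒢 X) a b) i k *
          fderiv ℝ (fun Y => (jacobianMatrix 𝒢 Y).adjugate j k) X (Pi.single j 1)) = 0 := by
      rw [Finset.sum_comm]
      refine Finset.sum_eq_zero fun k _ => ?_
      rw [← Finset.mul_sum, piola hΩ₀ hX h𝒢 hGinv k, mul_zero]
    -- second part gives the physical divergence
    have hS2 : (∑ j : Fin d, ∑ k : Fin d,
        (jacobianMatrix 𝒢 X).adjugate j k *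
          fderiv ℝ (fun Y =>
            f (q (𝒢 Y)) (fun a b => jacobianMatrix q (𝒢 Y) a b) i k) X (Pi.single j 1))
        = (jacobianMatrix 𝒢 X).det *
          ∑ k, fderiv ℝ (fun y => f (q y) (fun a b => jacobianMatrix q y a b) i k)
            (𝒢 X) (Pi.single k 1) := by
      have hchain : ∀ j k : Fin d, fderiv ℝ (fun Y =>
            f (q (𝒢 Y)) (fun a b => jacobianMatrix q (𝒢 Y) a b) i k) X (Pi.single j 1)
          = ∑ l, fderiv ℝ (fun y => f (q y) (fun a b => jacobianMatrix q y a b) i k)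
              (𝒢 X) (Pi.single l 1) * jacobianMatrix 𝒢 X l j :=
        fun j k => fderiv_comp_single (h𝒢d X hX) (hFd (𝒢 X) hmem i k) j
      have hGadj : ∀ l k : Fin d,
          (∑ j, jacobianMatrix 𝒢 X l j * (jacobianMatrix 𝒢 X).adjugate j k)
            = (jacobianMatrix 𝒢 X).det * (if l = k then 1 else 0) := by
        intro l k
        have h1 := Matrix.mul_adjugate (jacobianMatrix 𝒢 X)
        have h2 := congrArg (fun A => A l k) h1
        simpa [Matrix.mul_apply, Matrix.one_apply] using h2
      calc (∑ j : Fin d, ∑ k : Fin d,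
            (jacobianMatrix 𝒢 X).adjugate j k *
              fderiv ℝ (fun Y =>
                f (q (𝒢 Y)) (fun a b => jacobianMatrix q (𝒢 Y) a b) i k) X (Pi.single j 1))
          = ∑ j : Fin d, ∑ k : Fin d, ∑ l : Fin d,
              fderiv ℝ (fun y => f (q y) (fun a b => jacobianMatrix q y a b) i k)
                (𝒢 X) (Pi.single l 1) * (jacobianMatrix 𝒢 X l j *
                  (jacobianMatrix 𝒢 X).adjugate j k) := by
            refine Finset.sum_congr rfl fun j _ => Finset.sum_congr rfl fun k _ => ?_
            rw [hchain j k, Finset.mul_sum]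
            exact Finset.sum_congr rfl fun l _ => by ring
        _ = ∑ k : Fin d, ∑ l : Fin d,
              fderiv ℝ (fun y => f (q y) (fun a b => jacobianMatrix q y a b) i k)
                (𝒢 X) (Pi.single l 1) *
                ((jacobianMatrix 𝒢 X).det * (if l = k then 1 else 0)) := by
            rw [Finset.sum_comm]
            refine Finset.sum_congr rfl fun k _ => ?_
            rw [Finset.sum_comm]
            refine Finset.sum_congr rfl fun l _ => ?_
            rw [← Finset.mul_sum, hGadj l k]
        _ = (jacobianMatrix 𝒢 X).det *
              ∑ k, fderiv ℝ (fun y => f (q y) (fun a b => jacobianMatrix q y a b) i k)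
                (𝒢 X) (Pi.single k 1) := by
            simp only [mul_ite, mul_one, mul_zero, Finset.sum_ite_eq', Finset.mem_univ, if_true]
            rw [Finset.mul_sum]
            exact Finset.sum_congr rfl fun k _ => by ring
    rw [hS1, hS2, zero_add]
  -- rewrite of the right-hand side of (ii)
  have hrhs : ∀ X ∈ Ω₀, ∀ i : Fin m,
      s ((q ∘ 𝒢) X) (fun a b => ∑ l : Fin d,
          jacobianMatrix (q ∘ 𝒢) X a l * (jacobianMatrix 𝒢 X)⁻¹ l b) i
        = s (q (𝒢 X)) (fun a b => jacobianMatrix q (𝒢 X) a b) i := by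
    intro X hX i
    have harg : (fun a b => ∑ l : Fin d,
        jacobianMatrix (q ∘ 𝒢) X a l * (jacobianMatrix 𝒢 X)⁻¹ l b)
        = (fun a b => jacobianMatrix q (𝒢 X) a b) := by
      funext a b; exact hcomb X hX a b
    rw [harg]
    rfl
  constructor
  · intro h X hX i
    rw [hkey X hX i]
    have h2 := h (𝒢 X) (h𝒢bij.mapsTo hX) i
    rw [h2, hrhs X hX i]
  · intro h x hx i
    obtain ⟨X, hX, rfl⟩ := h𝒢bij.surjOn hx
    have h2 := h X hX i
    rw [hkey X hX i, hrhs X hX i] at h2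
    exact mul_left_cancel₀ (hdet X hX) h2
end

section
/- Let d ≥ 1 and let 𝒢 : Ω₀ → ℝ^d be C² on an open set Ω₀ ⊆ ℝ^d. Then each column of the adjugate of the Jacobian matrix of 𝒢 is divergence-free: for every i ∈ {1,…,d} and every X ∈ Ω₀, Σ_{j=1}^d ∂/∂X_j [adj(∇₀𝒢(X))]_{ji} = 0, where adj denotes the classical adjugate matrix (so that adj(G) = det(G)·G⁻¹ whenever G is invertible). (Piola identity.) -/
/-- The determinant, as a continuous multilinear map in the rows. -/
noncomputable def detCM (d : ℕ) :
    ContinuousMultilinearMap ℝ (fun _ : Fin d => (Fin d → ℝ)) ℝ where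
  toMultilinearMap :=
    (Matrix.detRowAlternating (R := ℝ) (n := Fin d)).toMultilinearMap
  cont := by
    have h : Continuous fun v : Fin d → Fin d → ℝ => (Matrix.of v).det :=
      Continuous.matrix_det continuous_id
    exact h

lemma detCM_apply {d : ℕ} (v : Fin d → Fin d → ℝ) :
    detCM d v = (Matrix.of v).det := rfl

/-- **Piola identity**: each column of the adjugate of the Jacobian matrix of a
`C²` map is divergence-free. -/
theorem piola_identity (d : ℕ) (hd : 1 ≤ d)
    (Ω₀ : Set (Fin d → ℝ)) (hΩ₀ : IsOpen Ω₀)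
    (𝒢 : (Fin d → ℝ) → (Fin d → ℝ)) (h𝒢 : ContDiffOn ℝ 2 𝒢 Ω₀) :
    ∀ i : Fin d, ∀ X ∈ Ω₀,
      ∑ j : Fin d,
        fderiv ℝ (fun Y => (jacobianMatrix 𝒢 Y).adjugate j i) X (Pi.single j 1) = 0 := by
  classical
  intro i X hX
  -- components of 𝒢 are C² at X
  have hgm : ∀ m : Fin d, ContDiffAt ℝ 2 (fun Y => 𝒢 Y m) X := by
    intro m
    have h1 : ContDiffAt ℝ 2 𝒢 X := h𝒢.contDiffAt (hΩ₀.mem_nhds hX)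
    exact ((ContinuousLinearMap.proj (R := ℝ) (φ := fun _ : Fin d => ℝ) m).contDiff).comp_contDiffAt X h1
  -- first derivatives are C¹ (hence differentiable) at X
  have hf : ∀ m : Fin d, ContDiffAt ℝ 1 (fderiv ℝ (fun Y => 𝒢 Y m)) X := by
    intro m
    exact (hgm m).fderiv_right (by norm_num)
  -- second derivatives
  set H : Fin d → ((Fin d → ℝ) →L[ℝ] (Fin d → ℝ) →L[ℝ] ℝ) :=
    fun m => fderiv ℝ (fderiv ℝ (fun Y => 𝒢 Y m)) X with hH_def
  have hH : ∀ m : Fin d, HasFDerivAt (fderiv ℝ (fun Y => 𝒢 Y m)) (H m) X := by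
    intro m
    exact ((hf m).differentiableAt (by norm_num)).hasFDerivAt
  have hsymm : ∀ (m : Fin d) (v w : (Fin d → ℝ)), H m v w = H m w v := by
    intro m v w
    exact ((hgm m).isSymmSndFDerivAt (by simp [minSmoothness_of_isRCLikeNormedField])).eq v w
  -- the rows of the matrix whose determinant is the adjugate entry
  set F : Fin d → (Fin d → ℝ) → (Fin d → Fin d → ℝ) := fun j Y m =>
    if m = i then Pi.single j 1
    else fun l => fderiv ℝ (fun Y' => 𝒢 Y' m) Y (Pi.single l 1) with hF_def
  -- derivative of the rows map
  set L : (Fin d → ℝ) →L[ℝ] (Fin d → Fin d → ℝ) :=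
    ContinuousLinearMap.pi fun m => ContinuousLinearMap.pi fun l =>
      if m = i then 0
      else (ContinuousLinearMap.apply ℝ ℝ ((Pi.single l 1 : Fin d → ℝ))).comp (H m) with hL_def
  have hLapp : ∀ (v : (Fin d → ℝ)) (m l : Fin d),
      L v m l = if m = i then 0 else H m v (Pi.single l 1) := by
    intro v m l
    simp only [hL_def, ContinuousLinearMap.pi_apply]
    by_cases hm : m = i
    · simp [hm]
    · simp [hm]
  have hFderiv : ∀ j : Fin d, HasFDerivAt (F j) L X := by
    intro j
    rw [hasFDerivAt_pi']
    intro m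
    rw [hL_def, ContinuousLinearMap.proj_pi]
    by_cases hm : m = i
    · have hz : (ContinuousLinearMap.pi fun l : Fin d =>
          if m = i then (0 : (Fin d → ℝ) →L[ℝ] ℝ)
          else (ContinuousLinearMap.apply ℝ ℝ ((Pi.single l 1 : Fin d → ℝ))).comp (H m))
          = (0 : (Fin d → ℝ) →L[ℝ] (Fin d → ℝ)) := by
        ext v l
        simp [hm]
      have hc : (fun Y => F j Y m) = fun _ => (Pi.single j 1 : Fin d → ℝ) := by
        funext Y; simp [hF_def, hm]
      rw [hz, hc]
      exact hasFDerivAt_const _ _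
    · rw [hasFDerivAt_pi']
      intro l
      rw [ContinuousLinearMap.proj_pi, if_neg hm]
      have h1 : HasFDerivAt (fun Y => fderiv ℝ (fun Y' => 𝒢 Y' m) Y (Pi.single l 1))
          ((ContinuousLinearMap.apply ℝ ℝ ((Pi.single l 1 : Fin d → ℝ))).comp (H m)) X := by
        exact ((ContinuousLinearMap.apply ℝ ℝ ((Pi.single l 1 : Fin d → ℝ))).hasFDerivAt).comp X (hH m)
      have h2 : (fun Y => F j Y m l) =
          fun Y => fderiv ℝ (fun Y' => 𝒢 Y' m) Y (Pi.single l 1) := by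
        funext Y; simp [hF_def, hm]
      rw [h2]
      exact h1
  -- the adjugate entry as a determinant of the rows
  have hkey : ∀ (j : Fin d) (Y : (Fin d → ℝ)),
      (jacobianMatrix 𝒢 Y).adjugate j i = detCM d (F j Y) := by
    intro j Y
    rw [Matrix.adjugate_apply, detCM_apply]
    congr 1
    ext m l
    rw [Matrix.updateRow_apply]
    by_cases hm : m = i
    · simp [hm, hF_def]
    · simp [hm, hF_def, jacobianMatrix]
  -- the derivative of the adjugate entry
  have hder : ∀ j : Fin d,
      HasFDerivAt (fun Y => (jacobianMatrix 𝒢 Y).adjugate j i)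
        (((detCM d).linearDeriv (F j X)).comp L) X := by
    intro j
    have hfun : (fun Y => (jacobianMatrix 𝒢 Y).adjugate j i)
        = fun Y => detCM d (F j Y) := funext fun Y => hkey j Y
    rw [hfun]
    exact ((detCM d).hasFDerivAt (F j X)).comp X (hFderiv j)
  have hfd : ∀ j : Fin d,
      fderiv ℝ (fun Y => (jacobianMatrix 𝒢 Y).adjugate j i) X (Pi.single j 1)
        = ∑ k : Fin d, detCM d (Function.update (F j X) k (L (Pi.single j 1) k)) := by
    intro j
    rw [(hder j).fderiv]
    rw [ContinuousLinearMap.comp_apply, ContinuousMultilinearMap.linearDeriv_apply]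
  -- the matrices appearing after expanding rows by multilinearity
  set B : Fin d → Fin d → Fin d → (Fin d → Fin d → ℝ) := fun j k l m =>
    if m = i then Pi.single j 1
    else if m = k then Pi.single l 1
    else fun l' => fderiv ℝ (fun Y' => 𝒢 Y' m) X (Pi.single l' 1) with hB_def
  -- antisymmetry of det B in (j, l)
  have hBanti : ∀ (j k l : Fin d), k ≠ i →
      detCM d (B l k j) = - detCM d (B j k l) := by
    intro j k l hk
    have hswap : B l k j = fun m => B j k l (Equiv.swap i k m) := by
      funext m
      by_cases hm : m = i
      · subst hm
        rw [Equiv.swap_apply_left]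
        simp [hB_def, hk, Ne.symm hk]
      · by_cases hm2 : m = k
        · subst hm2
          rw [Equiv.swap_apply_right]
          simp [hB_def, hk, Ne.symm hk]
        · rw [Equiv.swap_apply_of_ne_of_ne hm hm2]
          simp [hB_def, hm, hm2]
    rw [hswap, detCM_apply, detCM_apply]
    have : (Matrix.of fun m => B j k l (Equiv.swap i k m))
        = (Matrix.of (B j k l)).submatrix (Equiv.swap i k) id := by
      ext m l'; rfl
    rw [this, Matrix.det_permute, Equiv.Perm.sign_swap (Ne.symm hk)]
    simp
  -- expand each summand by multilinearity of det in row k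
  have hexp : ∀ (j k : Fin d), k ≠ i →
      detCM d (Function.update (F j X) k (L (Pi.single j 1) k))
        = ∑ l : Fin d, H k (Pi.single j 1) (Pi.single l 1) * detCM d (B j k l) := by
    intro j k hk
    have hrow : L (Pi.single j 1) k
        = ∑ l : Fin d, H k (Pi.single j 1) (Pi.single l 1) • (Pi.single l 1 : Fin d → ℝ) := by
      funext l'
      rw [Finset.sum_apply, hLapp, if_neg hk]
      simp only [Pi.smul_apply, Pi.single_apply, smul_eq_mul, mul_ite, mul_one, mul_zero]
      rw [Finset.sum_ite_eq Finset.univ l' (fun l => H k (Pi.single j 1) (Pi.single l 1))]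
      simp
    rw [hrow]
    rw [show (detCM d) (Function.update (F j X) k
          (∑ l : Fin d, H k (Pi.single j 1) (Pi.single l 1) • (Pi.single l 1 : Fin d → ℝ)))
        = ∑ l : Fin d, (detCM d) (Function.update (F j X) k
            (H k (Pi.single j 1) (Pi.single l 1) • (Pi.single l 1 : Fin d → ℝ)))
      from (detCM d).toMultilinearMap.map_update_sum Finset.univ k _ (F j X)]
    refine Finset.sum_congr rfl fun l _ => ?_
    rw [(detCM d).map_update_smul]
    rw [smul_eq_mul]
    congr 2
    funext m
    by_cases hm : m = k
    · subst hm; simp [hB_def, hk, Function.update_self]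
    · rw [Function.update_of_ne hm]
      by_cases hmi : m = i
      · simp [hB_def, hmi, hm, hF_def]
      · simp [hB_def, hmi, hm, hF_def]
  -- final cancellation
  rw [Finset.sum_congr rfl fun j _ => hfd j]
  rw [Finset.sum_comm]
  apply Finset.sum_eq_zero
  intro k _
  by_cases hk : k = i
  · subst hk
    apply Finset.sum_eq_zero
    intro j _
    apply (detCM d).map_coord_zero (i := k)
    rw [Function.update_self]
    funext l
    simp [hLapp]
  · rw [Finset.sum_congr rfl fun j _ => hexp j k hk]
    have hswap_sum : ∑ j : Fin d, ∑ l : Fin d,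
        H k (Pi.single j 1) (Pi.single l 1) * detCM d (B j k l)
        = - ∑ j : Fin d, ∑ l : Fin d,
          H k (Pi.single j 1) (Pi.single l 1) * detCM d (B j k l) := by
      conv_lhs => rw [Finset.sum_comm]
      rw [← Finset.sum_neg_distrib]
      apply Finset.sum_congr rfl
      intro l _
      rw [← Finset.sum_neg_distrib]
      apply Finset.sum_congr rfl
      intro j _
      rw [hsymm k (Pi.single l 1) (Pi.single j 1), hBanti j k l hk]
      ring
    linarith [hswap_sum]
end

section
/- Let d, m ≥ 1, let Ω₀ ⊆ ℝ^d be open, let 𝒢 : Ω₀ → ℝ^d be C² with invertible Jacobian G_𝒢(X) = ∇₀𝒢(X) at every X ∈ Ω₀, and let h : ℝ^d → ℝ^{m×d} be a C¹ matrix-valued field defined on a neighborhood of 𝒢(Ω₀). Define the transformed field H(X) = det(G_𝒢(X)) · h(𝒢(X)) · G_𝒢(X)⁻ᵀ. Then for every X ∈ Ω₀ and every i ∈ {1,…,m}, Σ_{j=1}^d ∂H_{ij}/∂X_j (X) = det(G_𝒢(X)) · (Σ_{j=1}^d ∂h_{ij}/∂x_j)(𝒢(X)). -/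
open scoped BigOperators

/-- Determinant as a signed sum over permutations, column form. -/
private lemma det_col {n : ℕ} (M : Matrix (Fin n) (Fin n) ℝ) :
    M.det = ∑ σ : Equiv.Perm (Fin n), ((Equiv.Perm.sign σ : ℤ) : ℝ) * ∏ i, M i (σ i) := by
  rw [← Matrix.det_transpose, Matrix.det_apply']
  simp [Matrix.transpose_apply]

/-- Expansion of a continuous linear functional on `Fin n → ℝ` in the standard basis. -/
private lemma clm_expand {n : ℕ} (L : (Fin n → ℝ) →L[ℝ] ℝ) (v : Fin n → ℝ) :
    L v = ∑ l, v l * L (Pi.single l 1) := by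
  conv_lhs => rw [← Finset.univ_sum_single v]
  rw [map_sum]
  refine Finset.sum_congr rfl fun l _ => ?_
  have h1 : Pi.single l (v l) = v l • (Pi.single l 1 : Fin n → ℝ) := by
    ext j
    by_cases hj : j = l <;> simp [Pi.single_apply, hj]
  rw [h1, map_smul, smul_eq_mul]

/-- The row-wise divergence of the Piola-transformed field
`H(X) = det(G_𝒢(X)) · h(𝒢(X)) · G_𝒢(X)⁻ᵀ` equals `det(G_𝒢(X))` times the
row-wise divergence of `h` evaluated at `𝒢(X)`. -/
theorem piola_transformed_divergence (d m : ℕ) (hd : 1 ≤ d) (hm : 1 ≤ m)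
    (Ω₀ : Set (Fin d → ℝ)) (hΩ₀ : IsOpen Ω₀)
    (𝒢 : (Fin d → ℝ) → (Fin d → ℝ)) (h𝒢 : ContDiffOn ℝ 2 𝒢 Ω₀)
    (hGinv : ∀ X ∈ Ω₀, IsUnit (jacobianMatrix 𝒢 X))
    (h : (Fin d → ℝ) → Fin m → Fin d → ℝ)
    (V : Set (Fin d → ℝ)) (hV : IsOpen V) (hGV : 𝒢 '' Ω₀ ⊆ V)
    (hh : ContDiffOn ℝ 1 h V)
    (H : (Fin d → ℝ) → Fin m → Fin d → ℝ)
    (hH : ∀ X i j, H X i j =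
      (jacobianMatrix 𝒢 X).det *
        ∑ k : Fin d, h (𝒢 X) i k * (jacobianMatrix 𝒢 X)⁻¹ j k) :
    ∀ X ∈ Ω₀, ∀ i : Fin m,
      ∑ j : Fin d, fderiv ℝ (fun Y => H Y i j) X (Pi.single j 1) =
        (jacobianMatrix 𝒢 X).det *
          ∑ j : Fin d, fderiv ℝ (fun y => h y i j) (𝒢 X) (Pi.single j 1) := by
  classical
  intro X hX i
  have hGXV : 𝒢 X ∈ V := hGV ⟨X, hX, rfl⟩
  -- entries of the Jacobian matrix as functions
  set g : Fin d → Fin d → (Fin d → ℝ) → ℝ :=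
    fun l j Y => fderiv ℝ (fun y => 𝒢 y l) Y (Pi.single j 1) with hgdef
  have hFg : ∀ Y l j, jacobianMatrix 𝒢 Y l j = g l j Y := fun Y l j => rfl
  -- components of 𝒢 are C²
  have hcomp : ∀ l, ContDiffOn ℝ 2 (fun y => 𝒢 y l) Ω₀ := fun l =>
    (ContinuousLinearMap.proj (R := ℝ) (φ := fun _ : Fin d => ℝ) l).contDiff.comp_contDiffOn h𝒢
  -- the derivative is C¹ on Ω₀
  have hfd : ∀ l, ContDiffOn ℝ 1 (fderiv ℝ (fun y => 𝒢 y l)) Ω₀ := fun l =>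
    (hcomp l).fderiv_of_isOpen hΩ₀ (by norm_num)
  have hdf : ∀ l, ∀ Y ∈ Ω₀, DifferentiableAt ℝ (fderiv ℝ (fun y => 𝒢 y l)) Y :=
    fun l Y hY => ((hfd l).differentiableOn one_ne_zero).differentiableAt (hΩ₀.mem_nhds hY)
  have hgdiff : ∀ l j, ∀ Y ∈ Ω₀, DifferentiableAt ℝ (g l j) Y := by
    intro l j Y hY
    exact (hdf l Y hY).clm_apply (differentiableAt_const _)
  -- the derivative of g in terms of the second derivative
  have hgderiv : ∀ l a b, fderiv ℝ (g l b) X (Pi.single a 1) =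
      fderiv ℝ (fderiv ℝ (fun y => 𝒢 y l)) X (Pi.single a 1) (Pi.single b 1) := by
    intro l a b
    have h1 : HasFDerivAt (g l b)
        ((ContinuousLinearMap.apply ℝ ℝ (Pi.single b 1 : Fin d → ℝ)).comp
          (fderiv ℝ (fderiv ℝ (fun y => 𝒢 y l)) X)) X :=
      (ContinuousLinearMap.apply ℝ ℝ (Pi.single b 1 : Fin d → ℝ)).hasFDerivAt.comp X
        (hdf l X hX).hasFDerivAt
    rw [h1.fderiv]
    rfl
  -- symmetry of second derivatives
  have hsymm : ∀ l a b, fderiv ℝ (g l b) X (Pi.single a 1)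
      = fderiv ℝ (g l a) X (Pi.single b 1) := by
    intro l a b
    rw [hgderiv l a b, hgderiv l b a]
    have hev : ∀ᶠ Y in nhds X, HasFDerivAt (fun y => 𝒢 y l)
        (fderiv ℝ (fun y => 𝒢 y l) Y) Y := by
      filter_upwards [hΩ₀.mem_nhds hX] with Y hY
      exact (((hcomp l).differentiableOn (by norm_num)).differentiableAt
        (hΩ₀.mem_nhds hY)).hasFDerivAt
    exact second_derivative_symmetric_of_eventually hev (hdf l X hX).hasFDerivAt _ _
  -- adjugate entries as polynomial expressions in g
  set A : Fin d → Fin d → (Fin d → ℝ) → ℝ := fun j k Y =>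
    ∑ σ : Equiv.Perm (Fin d), ((Equiv.Perm.sign σ : ℤ) : ℝ) *
      ((if σ k = j then (1:ℝ) else 0) * ∏ l ∈ Finset.univ.erase k, g l (σ l) Y) with hAdef
  have hAadj : ∀ j k Y, A j k Y = (jacobianMatrix 𝒢 Y).adjugate j k := by
    intro j k Y
    rw [Matrix.adjugate_apply, det_col]
    refine Finset.sum_congr rfl fun σ _ => ?_
    congr 1
    rw [← Finset.mul_prod_erase Finset.univ
      (fun i => ((jacobianMatrix 𝒢 Y).updateRow k (Pi.single j 1)) i (σ i))
      (Finset.mem_univ k)]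
    have e1 : ((jacobianMatrix 𝒢 Y).updateRow k (Pi.single j 1)) k (σ k)
        = if σ k = j then (1:ℝ) else 0 := by
      rw [Matrix.updateRow_self, Pi.single_apply]
    have e2 : ∀ l ∈ Finset.univ.erase k,
        ((jacobianMatrix 𝒢 Y).updateRow k (Pi.single j 1)) l (σ l) = g l (σ l) Y := by
      intro l hl
      rw [Matrix.updateRow_ne (Finset.mem_erase.mp hl).1]
      rfl
    rw [e1, Finset.prod_congr rfl e2]
  -- representation of H near X
  have hHrep : ∀ j, (fun Y => H Y i j) =ᶠ[nhds X]
      (fun Y => ∑ k, h (𝒢 Y) i k * A j k Y) := by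
    intro j
    filter_upwards [hΩ₀.mem_nhds hX] with Y hY
    rw [hH Y i j, Finset.mul_sum]
    refine Finset.sum_congr rfl fun k _ => ?_
    rw [hAadj j k Y]
    have hu : IsUnit (jacobianMatrix 𝒢 Y).det :=
      (Matrix.isUnit_iff_isUnit_det _).mp (hGinv Y hY)
    have hcancel : (jacobianMatrix 𝒢 Y).det * Ring.inverse (jacobianMatrix 𝒢 Y).det = 1 :=
      Ring.mul_inverse_cancel _ hu
    rw [Matrix.inv_def, Matrix.smul_apply, smul_eq_mul]
    calc (jacobianMatrix 𝒢 Y).det * (h (𝒢 Y) i k *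
          (Ring.inverse (jacobianMatrix 𝒢 Y).det * (jacobianMatrix 𝒢 Y).adjugate j k))
        = ((jacobianMatrix 𝒢 Y).det * Ring.inverse (jacobianMatrix 𝒢 Y).det) *
          (h (𝒢 Y) i k * (jacobianMatrix 𝒢 Y).adjugate j k) := by ring
      _ = h (𝒢 Y) i k * (jacobianMatrix 𝒢 Y).adjugate j k := by rw [hcancel, one_mul]
  -- differentiability of A at X
  have hdprod : ∀ (k : Fin d) (σ : Equiv.Perm (Fin d)),
      DifferentiableAt ℝ (fun Y => ∏ l ∈ Finset.univ.erase k, g l (σ l) Y) X := by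
    intro k σ
    exact (HasFDerivAt.finset_prod (u := Finset.univ.erase k)
      (g := fun l Y => g l (σ l) Y) (g' := fun l => fderiv ℝ (g l (σ l)) X)
      (fun l _ => (hgdiff l (σ l) X hX).hasFDerivAt)).differentiableAt
  have hAdiff : ∀ j k, DifferentiableAt ℝ (A j k) X := by
    intro j k
    refine DifferentiableAt.fun_sum fun σ _ => ?_
    refine DifferentiableAt.const_mul ?_ _
    refine DifferentiableAt.const_mul ?_ _
    exact hdprod k σ
  -- differentiability of the components of h at 𝒢 X
  have hhk : ∀ k, DifferentiableAt ℝ (fun y => h y i k) (𝒢 X) := by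
    intro k
    have hc : ContDiffOn ℝ 1 (fun y => h y i k) V :=
      ((ContinuousLinearMap.proj (R := ℝ) (φ := fun _ : Fin d => ℝ) k).comp
        (ContinuousLinearMap.proj (R := ℝ) (φ := fun _ : Fin m => Fin d → ℝ)
          i)).contDiff.comp_contDiffOn hh
    exact (hc.differentiableOn one_ne_zero).differentiableAt (hV.mem_nhds hGXV)
  have hGdiffX : DifferentiableAt ℝ 𝒢 X :=
    (h𝒢.differentiableOn (by norm_num)).differentiableAt (hΩ₀.mem_nhds hX)
  have hcompdiff : ∀ k, DifferentiableAt ℝ (fun Y => h (𝒢 Y) i k) X :=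
    fun k => (hhk k).comp X hGdiffX
  -- chain rule
  have hchain : ∀ j k, fderiv ℝ (fun Y => h (𝒢 Y) i k) X (Pi.single j 1) =
      ∑ l, g l j X * fderiv ℝ (fun y => h y i k) (𝒢 X) (Pi.single l 1) := by
    intro j k
    have hc : fderiv ℝ ((fun y => h y i k) ∘ 𝒢) X =
        (fderiv ℝ (fun y => h y i k) (𝒢 X)).comp (fderiv ℝ 𝒢 X) :=
      fderiv_comp X (hhk k) hGdiffX
    have e1 : fderiv ℝ (fun Y => h (𝒢 Y) i k) X (Pi.single j 1)
        = fderiv ℝ (fun y => h y i k) (𝒢 X) (fderiv ℝ 𝒢 X (Pi.single j 1)) := by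
      rw [show (fun Y => h (𝒢 Y) i k) = ((fun y => h y i k) ∘ 𝒢) from rfl, hc]
      rfl
    rw [e1, clm_expand]
    refine Finset.sum_congr rfl fun l _ => ?_
    congr 1
    have hl : fderiv ℝ (fun y => 𝒢 y l) X =
        (ContinuousLinearMap.proj (R := ℝ) (φ := fun _ : Fin d => ℝ) l).comp
          (fderiv ℝ 𝒢 X) :=
      ((ContinuousLinearMap.proj (R := ℝ) (φ := fun _ : Fin d => ℝ)
        l).hasFDerivAt.comp X hGdiffX.hasFDerivAt).fderiv
    show fderiv ℝ 𝒢 X (Pi.single j 1) l = g l j X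
    rw [hgdef]
    simp only [hl]
    rfl
  -- the Piola identity: row divergence of the adjugate vanishes
  have hPiola : ∀ k, (∑ j, fderiv ℝ (A j k) X (Pi.single j 1)) = 0 := by
    intro k
    have hstep : ∀ j, fderiv ℝ (A j k) X (Pi.single j 1) =
        ∑ σ : Equiv.Perm (Fin d), ((Equiv.Perm.sign σ : ℤ) : ℝ) *
          ((if σ k = j then (1:ℝ) else 0) *
            fderiv ℝ (fun Y => ∏ l ∈ Finset.univ.erase k, g l (σ l) Y) X
              (Pi.single j 1)) := by
      intro j
      rw [hAdef]
      rw [fderiv_fun_sum (fun σ _ => ((hdprod k σ).const_mul _).const_mul _)]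
      rw [ContinuousLinearMap.sum_apply]
      refine Finset.sum_congr rfl fun σ _ => ?_
      rw [fderiv_const_mul ((hdprod k σ).const_mul _), fderiv_const_mul (hdprod k σ)]
      simp only [ContinuousLinearMap.smul_apply, smul_eq_mul]
    have hprodderiv : ∀ σ : Equiv.Perm (Fin d), ∀ v,
        fderiv ℝ (fun Y => ∏ l ∈ Finset.univ.erase k, g l (σ l) Y) X v =
          ∑ p ∈ Finset.univ.erase k,
            (∏ l ∈ (Finset.univ.erase k).erase p, g l (σ l) X) *
              fderiv ℝ (g p (σ p)) X v := by
      intro σ v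
      have hfp : fderiv ℝ (fun Y => ∏ l ∈ Finset.univ.erase k, g l (σ l) Y) X =
          ∑ p ∈ Finset.univ.erase k,
            (∏ l ∈ (Finset.univ.erase k).erase p, g l (σ l) X) •
              fderiv ℝ (g p (σ p)) X :=
        (HasFDerivAt.finset_prod (u := Finset.univ.erase k)
          (g := fun l Y => g l (σ l) Y) (g' := fun l => fderiv ℝ (g l (σ l)) X)
          (fun p _ => (hgdiff p (σ p) X hX).hasFDerivAt)).fderiv
      rw [hfp, ContinuousLinearMap.sum_apply]
      simp [smul_eq_mul]
    calc (∑ j, fderiv ℝ (A j k) X (Pi.single j 1))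
        = ∑ j, ∑ σ : Equiv.Perm (Fin d), ((Equiv.Perm.sign σ : ℤ) : ℝ) *
            ((if σ k = j then (1:ℝ) else 0) *
              fderiv ℝ (fun Y => ∏ l ∈ Finset.univ.erase k, g l (σ l) Y) X
                (Pi.single j 1)) := Finset.sum_congr rfl fun j _ => hstep j
      _ = ∑ σ : Equiv.Perm (Fin d), ∑ j, ((Equiv.Perm.sign σ : ℤ) : ℝ) *
            ((if σ k = j then (1:ℝ) else 0) *
              fderiv ℝ (fun Y => ∏ l ∈ Finset.univ.erase k, g l (σ l) Y) X
                (Pi.single j 1)) := Finset.sum_comm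
      _ = ∑ σ : Equiv.Perm (Fin d), ((Equiv.Perm.sign σ : ℤ) : ℝ) *
            fderiv ℝ (fun Y => ∏ l ∈ Finset.univ.erase k, g l (σ l) Y) X
              (Pi.single (σ k) 1) := by
          refine Finset.sum_congr rfl fun σ _ => ?_
          rw [Finset.sum_eq_single (σ k)]
          · simp
          · intro j _ hj
            simp [Ne.symm hj]
          · simp
      _ = ∑ σ : Equiv.Perm (Fin d), ∑ p ∈ Finset.univ.erase k,
            ((Equiv.Perm.sign σ : ℤ) : ℝ) *
              ((∏ l ∈ (Finset.univ.erase k).erase p, g l (σ l) X) *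
                fderiv ℝ (g p (σ p)) X (Pi.single (σ k) 1)) := by
          refine Finset.sum_congr rfl fun σ _ => ?_
          rw [hprodderiv σ, Finset.mul_sum]
      _ = ∑ x ∈ Finset.univ ×ˢ Finset.univ.erase k,
            ((Equiv.Perm.sign x.1 : ℤ) : ℝ) *
              ((∏ l ∈ (Finset.univ.erase k).erase x.2, g l (x.1 l) X) *
                fderiv ℝ (g x.2 (x.1 x.2)) X (Pi.single (x.1 k) 1)) := by
          rw [Finset.sum_product]
      _ = 0 := ?_
    refine Finset.sum_involution
      (fun x _ => (x.1 * Equiv.swap k x.2, x.2)) ?_ ?_ ?_ ?_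
    · -- cancellation
      rintro ⟨σ, p⟩ hx
      have hpk : p ≠ k := (Finset.mem_erase.mp (Finset.mem_product.mp hx).2).1
      have hσk : (σ * Equiv.swap k p) k = σ p := by
        simp [Equiv.Perm.mul_apply, Equiv.swap_apply_left]
      have hσp : (σ * Equiv.swap k p) p = σ k := by
        simp [Equiv.Perm.mul_apply, Equiv.swap_apply_right]
      have hsign : ((Equiv.Perm.sign (σ * Equiv.swap k p) : ℤ) : ℝ)
          = -((Equiv.Perm.sign σ : ℤ) : ℝ) := by
        rw [Equiv.Perm.sign_mul, Equiv.Perm.sign_swap (Ne.symm hpk)]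
        push_cast
        ring
      have hprod : (∏ l ∈ (Finset.univ.erase k).erase p, g l ((σ * Equiv.swap k p) l) X)
          = ∏ l ∈ (Finset.univ.erase k).erase p, g l (σ l) X := by
        refine Finset.prod_congr rfl fun l hl => ?_
        have hlp : l ≠ p := (Finset.mem_erase.mp hl).1
        have hlk : l ≠ k := (Finset.mem_erase.mp (Finset.mem_erase.mp hl).2).1
        rw [Equiv.Perm.mul_apply, Equiv.swap_apply_of_ne_of_ne hlk hlp]
      have hsym : fderiv ℝ (g p (σ k)) X (Pi.single (σ p) 1)
          = fderiv ℝ (g p (σ p)) X (Pi.single (σ k) 1) := hsymm p (σ p) (σ k)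
      simp only [hσk, hσp, hsign, hprod, hsym]
      ring
    · -- not a fixed point
      rintro ⟨σ, p⟩ hx -
      have hpk : p ≠ k := (Finset.mem_erase.mp (Finset.mem_product.mp hx).2).1
      intro heq
      have h1 : (σ * Equiv.swap k p) k = σ k := by
        rw [show (σ * Equiv.swap k p) = σ from congrArg Prod.fst heq]
      rw [Equiv.Perm.mul_apply, Equiv.swap_apply_left] at h1
      exact hpk (σ.injective h1)
    · -- membership
      rintro ⟨σ, p⟩ hx
      exact Finset.mem_product.mpr ⟨Finset.mem_univ _, (Finset.mem_product.mp hx).2⟩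
    · -- involution
      rintro ⟨σ, p⟩ hx
      simp [mul_assoc]
  -- key identity: ∑ⱼ g l j · A j k = δ_{lk} det
  have hkey : ∀ l k, (∑ j, g l j X * A j k X) =
      if l = k then (jacobianMatrix 𝒢 X).det else 0 := by
    intro l k
    have e1 : (∑ j, g l j X * A j k X) =
        ((jacobianMatrix 𝒢 X) * (jacobianMatrix 𝒢 X).adjugate) l k := by
      rw [Matrix.mul_apply]
      exact Finset.sum_congr rfl fun j _ => by rw [hAadj j k X]; rfl
    rw [e1, Matrix.mul_adjugate, Matrix.smul_apply, Matrix.one_apply, smul_eq_mul]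
    split <;> simp
  -- main computation
  have hmain : ∀ j, fderiv ℝ (fun Y => H Y i j) X (Pi.single j 1) =
      ∑ k, (fderiv ℝ (fun Y => h (𝒢 Y) i k) X (Pi.single j 1) * A j k X
        + h (𝒢 X) i k * fderiv ℝ (A j k) X (Pi.single j 1)) := by
    intro j
    rw [(hHrep j).fderiv_eq]
    rw [fderiv_fun_sum (fun k _ => (hcompdiff k).fun_mul (hAdiff j k))]
    rw [ContinuousLinearMap.sum_apply]
    refine Finset.sum_congr rfl fun k _ => ?_
    rw [fderiv_fun_mul (hcompdiff k) (hAdiff j k)]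
    simp only [ContinuousLinearMap.add_apply, ContinuousLinearMap.smul_apply, smul_eq_mul]
    ring
  calc ∑ j, fderiv ℝ (fun Y => H Y i j) X (Pi.single j 1)
      = ∑ j, ∑ k, (fderiv ℝ (fun Y => h (𝒢 Y) i k) X (Pi.single j 1) * A j k X
          + h (𝒢 X) i k * fderiv ℝ (A j k) X (Pi.single j 1)) :=
        Finset.sum_congr rfl fun j _ => hmain j
    _ = ∑ k, ∑ j, (fderiv ℝ (fun Y => h (𝒢 Y) i k) X (Pi.single j 1) * A j k X
          + h (𝒢 X) i k * fderiv ℝ (A j k) X (Pi.single j 1)) := Finset.sum_comm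
    _ = ∑ k, ((∑ j, fderiv ℝ (fun Y => h (𝒢 Y) i k) X (Pi.single j 1) * A j k X)
          + h (𝒢 X) i k * (∑ j, fderiv ℝ (A j k) X (Pi.single j 1))) := by
        refine Finset.sum_congr rfl fun k _ => ?_
        rw [Finset.sum_add_distrib, Finset.mul_sum]
    _ = ∑ k, (∑ j, fderiv ℝ (fun Y => h (𝒢 Y) i k) X (Pi.single j 1) * A j k X) := by
        refine Finset.sum_congr rfl fun k _ => ?_
        rw [hPiola k, mul_zero, add_zero]
    _ = ∑ k, fderiv ℝ (fun y => h y i k) (𝒢 X) (Pi.single k 1) *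
          (jacobianMatrix 𝒢 X).det := by
        refine Finset.sum_congr rfl fun k _ => ?_
        calc (∑ j, fderiv ℝ (fun Y => h (𝒢 Y) i k) X (Pi.single j 1) * A j k X)
            = ∑ j, ∑ l, (g l j X *
                fderiv ℝ (fun y => h y i k) (𝒢 X) (Pi.single l 1)) * A j k X := by
              refine Finset.sum_congr rfl fun j _ => ?_
              rw [hchain j k, Finset.sum_mul]
          _ = ∑ l, fderiv ℝ (fun y => h y i k) (𝒢 X) (Pi.single l 1) *
                (∑ j, g l j X * A j k X) := by
              rw [Finset.sum_comm]
              refine Finset.sum_congr rfl fun l _ => ?_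
              rw [Finset.mul_sum]
              refine Finset.sum_congr rfl fun j _ => ?_
              ring
          _ = fderiv ℝ (fun y => h y i k) (𝒢 X) (Pi.single k 1) *
                (jacobianMatrix 𝒢 X).det := by
              rw [Finset.sum_eq_single k]
              · rw [hkey k k, if_pos rfl]
              · intro l _ hl
                rw [hkey l k, if_neg hl, mul_zero]
              · simp
    _ = (jacobianMatrix 𝒢 X).det *
          ∑ j, fderiv ℝ (fun y => h y i j) (𝒢 X) (Pi.single j 1) := by
        rw [Finset.mul_sum]
        exact Finset.sum_congr rfl fun k _ => mul_comm _ _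
end

section
/- Let c, x_t ∈ (−1, 1) satisfy 2|c − x_t| < 1 − c². Then the mapping x ↦ 𝓗(x; c, x_t) is strictly increasing on [−1, 1] and restricts to a bijection from [−1, 1] onto [−1, 1] with 𝓗(−1; c, x_t) = −1, 𝓗(1; c, x_t) = 1, and 𝓗(c; c, x_t) = x_t. -/
/-- The quadratic parametric mapping used to align a feature at `x = c`
with the target position `x_t` while fixing the endpoints `±1`. -/
noncomputable def Hmap (c xt x : ℝ) : ℝ :=
  xt * ((x - 1) * (x + 1)) / ((c - 1) * (c + 1)) +
    (x + 1) * (x - c) / (2 * (1 - c)) -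
    (x - 1) * (x - c) / (2 * (c + 1))

theorem Hmap_strictMono_bijOn (c xt : ℝ) (hc : c ∈ Set.Ioo (-1 : ℝ) 1)
    (hxt : xt ∈ Set.Ioo (-1 : ℝ) 1) (h : 2 * |c - xt| < 1 - c ^ 2) :
    StrictMonoOn (Hmap c xt) (Set.Icc (-1 : ℝ) 1) ∧
    Set.BijOn (Hmap c xt) (Set.Icc (-1 : ℝ) 1) (Set.Icc (-1 : ℝ) 1) ∧
    Hmap c xt (-1) = -1 ∧ Hmap c xt 1 = 1 ∧ Hmap c xt c = xt := by
  obtain ⟨hc1, hc2⟩ := hc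
  have hne1 : c - 1 ≠ 0 := by linarith
  have hne2 : c + 1 ≠ 0 := by linarith
  have hne3 : (1:ℝ) - c ≠ 0 := by linarith
  have hpos : (0:ℝ) < 1 - c^2 := by nlinarith
  set k : ℝ := (c - xt) / (1 - c^2) with hk
  have hkey : ∀ x : ℝ, Hmap c xt x = x + k * (x^2 - 1) := by
    intro x
    unfold Hmap
    rw [hk]
    field_simp
    ring
  have hkabs : |k| < 1/2 := by
    rw [hk, abs_div, abs_of_pos hpos, div_lt_iff₀ hpos]
    linarith [h]
  have hklt := (abs_lt.mp hkabs)
  have hmono : StrictMonoOn (Hmap c xt) (Set.Icc (-1 : ℝ) 1) := by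
    intro x hx y hy hxy
    rw [hkey x, hkey y]
    have hx1 := hx.1; have hx2 := hx.2
    have hy1 := hy.1; have hy2 := hy.2
    nlinarith [mul_pos (sub_pos.mpr hxy) (sub_pos.mpr hxy),
      mul_nonneg (sub_pos.mpr hxy).le (sub_nonneg.mpr hy2),
      mul_nonneg (sub_pos.mpr hxy).le (by linarith : (0:ℝ) ≤ x + 1),
      mul_nonneg (sub_pos.mpr hxy).le (by linarith : (0:ℝ) ≤ 1 - x),
      mul_nonneg (sub_pos.mpr hxy).le (by linarith : (0:ℝ) ≤ y + 1)]
  have hcont : ContinuousOn (Hmap c xt) (Set.Icc (-1 : ℝ) 1) := by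
    have : Hmap c xt = fun x => x + k * (x^2 - 1) := funext hkey
    rw [this]
    fun_prop
  have hHm1 : Hmap c xt (-1) = -1 := by rw [hkey]; ring
  have hH1 : Hmap c xt 1 = 1 := by rw [hkey]; ring
  have hHc : Hmap c xt c = xt := by
    rw [hkey]
    rw [hk]
    field_simp
    ring
  refine ⟨hmono, ⟨?_, hmono.injOn, ?_⟩, hHm1, hH1, hHc⟩
  · intro x hx
    constructor
    · have := hmono.monotoneOn (Set.left_mem_Icc.mpr (by norm_num)) hx hx.1
      rwa [hHm1] at this
    · have := hmono.monotoneOn hx (Set.right_mem_Icc.mpr (by norm_num)) hx.2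
      rwa [hH1] at this
  · have := intermediate_value_Icc (by norm_num : (-1:ℝ) ≤ 1) hcont
    rw [hHm1, hH1] at this
    exact this
end

section
/- Let d ≥ 1 and let φ : ℝ → ℝ be the Wendland C2 kernel, φ(η) = (1 − η)⁴(4η + 1) for 0 ≤ η ≤ 1 and φ(η) = 0 for η > 1. Then the radial function Φ : ℝ^d → ℝ defined by Φ(x) = φ(‖x‖) (Euclidean norm) is twice continuously differentiable on all of ℝ^d, including at the origin and across the sphere ‖x‖ = 1. -/
/-- The Wendland C2 compactly supported radial basis function kernel. -/
noncomputable def wendlandC2 (η : ℝ) : ℝ :=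
  if η ≤ 1 then (1 - η) ^ 4 * (4 * η + 1) else 0

open Real

set_option maxHeartbeats 1000000
set_option synthInstance.maxHeartbeats 400000

section Aux

variable {E : Type*} [NormedAddCommGroup E] [InnerProductSpace ℝ E]

/-- `innerSL` over `ℝ`, as a genuine `ℝ`-linear continuous linear map. -/
noncomputable def wendInnerSL' (E : Type*) [NormedAddCommGroup E] [InnerProductSpace ℝ E] :
    E →L[ℝ] (E →L[ℝ] ℝ) := innerSL ℝ

@[simp] lemma wendInnerSL'_apply (x : E) : wendInnerSL' E x = innerSL ℝ x := rfl

/-- Candidate derivative of `y ↦ ‖y‖ • innerSL ℝ y`. -/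
noncomputable def wendGD (x : E) : E →L[ℝ] (E →L[ℝ] ℝ) :=
  ‖x‖ • wendInnerSL' E + (‖x‖⁻¹ • innerSL ℝ x).smulRight (innerSL ℝ x)

lemma wend_hasFDerivAt_norm {x : E} (hx : x ≠ 0) :
    HasFDerivAt (fun y : E => ‖y‖) (‖x‖⁻¹ • innerSL ℝ x) x := by
  have h0 : ‖x‖ ^ 2 ≠ 0 := pow_ne_zero 2 (norm_ne_zero_iff.2 hx)
  have hsqrt : HasDerivAt Real.sqrt (1 / (2 * Real.sqrt (‖x‖ ^ 2))) (‖x‖ ^ 2) :=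
    Real.hasDerivAt_sqrt h0
  have hnormsq := (hasStrictFDerivAt_norm_sq x).hasFDerivAt
  have h := hsqrt.comp_hasFDerivAt x hnormsq
  have hfun : (Real.sqrt ∘ fun y : E => ‖y‖ ^ 2) = fun y : E => ‖y‖ := by
    funext y; simp [Function.comp, Real.sqrt_sq (norm_nonneg y)]
  rw [hfun] at h
  refine h.congr_fderiv ?_
  ext y
  have hxn : ‖x‖ ≠ 0 := norm_ne_zero_iff.2 hx
  simp [Real.sqrt_sq (norm_nonneg x), smul_smul]
  field_simp

lemma hasFDerivAt_normSmulInner (x : E) :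
    HasFDerivAt (fun y : E => ‖y‖ • innerSL ℝ y) (wendGD x) x := by
  rcases eq_or_ne x 0 with rfl | hx
  · have hg0 : wendGD (0 : E) = 0 := by ext y; simp [wendGD]
    rw [hg0, hasFDerivAt_iff_isLittleO]
    simp only [norm_zero, zero_smul, sub_zero, map_zero, ContinuousLinearMap.zero_apply]
    rw [Asymptotics.isLittleO_iff]
    intro c hc
    filter_upwards [Metric.ball_mem_nhds (0 : E) hc] with y hy
    rw [mem_ball_zero_iff] at hy
    have h1 : ‖‖y‖ • innerSL ℝ y‖ = ‖y‖ * ‖y‖ := by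
      rw [norm_smul ‖y‖ (innerSL ℝ y), innerSL_apply_norm, norm_norm]
    rw [h1]
    nlinarith [norm_nonneg y]
  · have h2 := (wend_hasFDerivAt_norm hx).smul ((wendInnerSL' E).hasFDerivAt (x := x))
    exact h2

lemma contDiff_one_normSmulInner : ContDiff ℝ 1 (fun y : E => ‖y‖ • innerSL ℝ y) := by
  rw [contDiff_one_iff_fderiv]
  refine ⟨fun x => (hasFDerivAt_normSmulInner x).differentiableAt, ?_⟩
  have hf : (fderiv ℝ fun y : E => ‖y‖ • innerSL ℝ y) = wendGD := by
    funext x; exact (hasFDerivAt_normSmulInner x).fderiv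
  rw [hf]
  have h1 : Continuous fun x : E => ‖x‖ • wendInnerSL' E := continuous_norm.smul continuous_const
  have h2 : Continuous fun x : E =>
      (‖x‖⁻¹ • innerSL ℝ x).smulRight (innerSL ℝ x) := by
    rw [continuous_iff_continuousAt]
    intro x
    rcases eq_or_ne x 0 with rfl | hx
    · have hval : (‖(0:E)‖⁻¹ • innerSL ℝ (0:E)).smulRight (innerSL ℝ (0:E)) = 0 := by
        ext y; simp
      rw [ContinuousAt, hval]
      have hb : ∀ y : E, ‖(‖y‖⁻¹ • innerSL ℝ y).smulRight (innerSL ℝ y)‖ ≤ ‖y‖ := by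
        intro y
        rw [ContinuousLinearMap.norm_smulRight_apply, norm_smul, innerSL_apply_norm]
        rcases eq_or_ne y 0 with rfl | hy
        · simp
        · have hny : ‖y‖ ≠ 0 := norm_ne_zero_iff.2 hy
          rw [norm_inv, norm_norm]
          rw [inv_mul_cancel₀ hny, one_mul]
      refine squeeze_zero_norm (f := fun x : E => (‖x‖⁻¹ • innerSL ℝ x).smulRight (innerSL ℝ x))
        hb ?_
      simpa using continuous_norm.tendsto (0 : E)
    · have hc : ContinuousAt (fun x : E => ‖x‖⁻¹ • innerSL ℝ x) x := by
        refine ContinuousAt.smul (f := fun x : E => ‖x‖⁻¹) ?_ (wendInnerSL' E).continuous.continuousAt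
        exact continuous_norm.continuousAt.inv₀ (norm_ne_zero_iff.2 hx)
      have hfc : ContinuousAt (fun x : E => innerSL ℝ x) x :=
        (wendInnerSL' E).continuous.continuousAt
      exact ((ContinuousLinearMap.smulRightL ℝ E (E →L[ℝ] ℝ)).continuous₂.continuousAt).comp
        (hc.prodMk hfc)
  letI : NormedAddCommGroup (E →L[ℝ] E →L[ℝ] ℝ) := inferInstance
  exact (h1.add h2 : _)

lemma piecewise_hasDerivAt {p p' : ℝ → ℝ} (hp : ∀ t, HasDerivAt p (p' t) t)
    (h1 : p 1 = 0) (h1' : p' 1 = 0) (η : ℝ) :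
    HasDerivAt (fun t => if t ≤ 1 then p t else 0) (if η ≤ 1 then p' η else 0) η := by
  rcases lt_trichotomy η 1 with h | rfl | h
  · rw [if_pos h.le]
    refine (hp η).congr_of_eventuallyEq ?_
    filter_upwards [Iio_mem_nhds h] with t ht
    rw [if_pos (le_of_lt ht)]
  · rw [if_pos le_rfl, h1']
    have hIic : HasDerivWithinAt (fun t => if t ≤ 1 then p t else 0) 0 (Set.Iic 1) 1 := by
      have h := (hp 1).hasDerivWithinAt (s := Set.Iic 1)
      rw [h1'] at h
      exact h.congr (fun t ht => if_pos ht) (if_pos le_rfl)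
    have hIci : HasDerivWithinAt (fun t => if t ≤ 1 then p t else 0) 0 (Set.Ici 1) 1 := by
      refine (hasDerivWithinAt_const 1 (Set.Ici 1) 0).congr (fun t ht => ?_) ?_
      · rcases eq_or_lt_of_le (Set.mem_Ici.1 ht) with rfl | h'
        · simpa using h1
        · rw [if_neg (not_le.2 h')]
      · simpa using h1
    have h := hIic.union hIci
    rw [Set.Iic_union_Ici] at h
    exact h.hasDerivAt (by simp)
  · rw [if_neg (not_le.2 h)]
    refine (hasDerivAt_const η 0).congr_of_eventuallyEq ?_
    filter_upwards [Ioi_mem_nhds h] with t ht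
    rw [if_neg (not_le.2 ht)]

lemma hasDerivAt_wpoly (t : ℝ) :
    HasDerivAt (fun t : ℝ => (1 - t) ^ 4 * (4 * t + 1)) (-20 * t * (1 - t) ^ 3) t := by
  have h1 : HasDerivAt (fun t : ℝ => (1 - t) ^ 4) (4 * (1 - t) ^ 3 * (-1)) t := by
    simpa using (((hasDerivAt_id t).const_sub 1).fun_pow 4)
  have h2 : HasDerivAt (fun t : ℝ => 4 * t + 1) 4 t := by
    simpa using ((hasDerivAt_id t).const_mul 4).add_const 1
  have h := h1.mul h2
  refine h.congr_deriv ?_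
  ring

lemma hasDerivAt_ppoly (t : ℝ) :
    HasDerivAt (fun t : ℝ => -20 * (1 - t) ^ 3) (60 * (1 - t) ^ 2) t := by
  have h1 : HasDerivAt (fun t : ℝ => (1 - t) ^ 3) (3 * (1 - t) ^ 2 * (-1)) t := by
    simpa using (((hasDerivAt_id t).const_sub 1).fun_pow 3)
  have h := h1.const_mul (-20 : ℝ)
  refine h.congr_deriv ?_
  ring

/-- The scalar factor in the first derivative of the radial Wendland function. -/
noncomputable def wpsi (η : ℝ) : ℝ := if η ≤ 1 then -20 * (1 - η) ^ 3 else 0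

lemma hasDerivAt_wendlandC2 (η : ℝ) :
    HasDerivAt wendlandC2 (if η ≤ 1 then -20 * η * (1 - η) ^ 3 else 0) η :=
  piecewise_hasDerivAt (p' := fun t => -20 * t * (1 - t) ^ 3)
    hasDerivAt_wpoly (by norm_num) (by norm_num) η

lemma hasDerivAt_wpsi (η : ℝ) :
    HasDerivAt wpsi (if η ≤ 1 then 60 * (1 - η) ^ 2 else 0) η :=
  piecewise_hasDerivAt (p' := fun t => 60 * (1 - t) ^ 2)
    hasDerivAt_ppoly (by norm_num) (by norm_num) η

lemma contDiff_one_wpsi : ContDiff ℝ 1 wpsi := by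
  rw [contDiff_one_iff_deriv]
  refine ⟨fun η => (hasDerivAt_wpsi η).differentiableAt, ?_⟩
  have hd : deriv wpsi = fun η => if η ≤ 1 then 60 * (1 - η) ^ 2 else 0 := by
    funext η; exact (hasDerivAt_wpsi η).deriv
  rw [hd]
  refine Continuous.if_le (by continuity) continuous_const continuous_id continuous_const ?_
  intro x hx
  simp [hx]

/-- The first derivative of the radial Wendland function. -/
lemma hasFDerivAt_wendland_radial (x : E) :
    HasFDerivAt (fun y : E => wendlandC2 ‖y‖) (wpsi ‖x‖ • innerSL ℝ x) x := by
  rcases eq_or_ne x 0 with rfl | hx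
  · have h0 : wpsi ‖(0:E)‖ • innerSL ℝ (0:E) = 0 := by simp
    rw [h0, hasFDerivAt_iff_isLittleO]
    rw [Asymptotics.isLittleO_iff]
    intro c hc
    have hc' : 0 < min 1 (c / 49) := lt_min one_pos (by positivity)
    filter_upwards [Metric.ball_mem_nhds (0 : E) hc'] with y hy
    rw [mem_ball_zero_iff] at hy
    have hy1 : ‖y‖ < 1 := lt_of_lt_of_le hy (min_le_left _ _)
    have hy2 : ‖y‖ < c / 49 := lt_of_lt_of_le hy (min_le_right _ _)
    have hval : wendlandC2 ‖y‖ = (1 - ‖y‖) ^ 4 * (4 * ‖y‖ + 1) := by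
      rw [wendlandC2, if_pos hy1.le]
    have hval0 : wendlandC2 ‖(0:E)‖ = 1 := by norm_num [wendlandC2]
    simp only [ContinuousLinearMap.zero_apply, sub_zero, hval, hval0]
    rw [Real.norm_eq_abs]
    have hn : (0:ℝ) ≤ ‖y‖ := norm_nonneg y
    have key : |(1 - ‖y‖) ^ 4 * (4 * ‖y‖ + 1) - 1| ≤ 49 * ‖y‖ ^ 2 := by
      rw [abs_le]
      constructor <;>
        nlinarith [mul_nonneg hn hn, mul_nonneg (mul_nonneg hn hn) hn,
          mul_nonneg (mul_nonneg (mul_nonneg hn hn) hn) hn,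
          mul_nonneg (mul_nonneg (mul_nonneg (mul_nonneg hn hn) hn) hn) hn,
          mul_nonneg (mul_nonneg hn hn) (sub_nonneg.2 hy1.le),
          mul_nonneg (mul_nonneg (mul_nonneg hn hn) hn) (sub_nonneg.2 hy1.le),
          mul_nonneg (mul_nonneg (mul_nonneg (mul_nonneg hn hn) hn) hn) (sub_nonneg.2 hy1.le)]
    calc |(1 - ‖y‖) ^ 4 * (4 * ‖y‖ + 1) - 1| ≤ 49 * ‖y‖ ^ 2 := key
      _ ≤ c * ‖y‖ := by nlinarith [mul_le_mul_of_nonneg_right hy2.le hn]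
  · have hnx : ‖x‖ ≠ 0 := norm_ne_zero_iff.2 hx
    have h := (hasDerivAt_wendlandC2 ‖x‖).comp_hasFDerivAt x (wend_hasFDerivAt_norm hx)
    refine h.congr_fderiv ?_
    rw [smul_smul]
    congr 1
    rw [wpsi]
    split
    · field_simp
    · simp

lemma contDiff_one_wendland_fderiv :
    ContDiff ℝ 1 (fun x : E => wpsi ‖x‖ • innerSL ℝ x) := by
  rw [contDiff_iff_contDiffAt]
  intro x
  rcases eq_or_ne x 0 with rfl | hx
  · -- near the origin, rewrite using smooth pieces
    have hH : ContDiff ℝ 1 (fun y : E =>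
        ((-20 : ℝ) - 60 * ‖y‖ ^ 2 + 20 * ‖y‖ ^ (3 : ℝ)) • wendInnerSL' E y
          + (60 : ℝ) • (‖y‖ • innerSL ℝ y)) := by
      refine ContDiff.add ?_ (contDiff_one_normSmulInner.const_smul (60:ℝ))
      refine ContDiff.smul (𝕜' := ℝ) ?_ ((wendInnerSL' E).contDiff)
      refine ContDiff.add (ContDiff.sub contDiff_const ?_) ?_
      · exact contDiff_const.mul (contDiff_norm_sq ℝ)
      · exact contDiff_const.mul (contDiff_norm_rpow (by norm_num : (1:ℝ) < 3))
    refine hH.contDiffAt.congr_of_eventuallyEq ?_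
    filter_upwards [Metric.ball_mem_nhds (0 : E) one_pos] with y hy
    rw [mem_ball_zero_iff] at hy
    have hrpow : ‖y‖ ^ (3 : ℝ) = ‖y‖ ^ (3 : ℕ) := Real.rpow_natCast _ 3
    have hpsi : wpsi ‖y‖ =
        ((-20 : ℝ) - 60 * ‖y‖ ^ 2 + 20 * ‖y‖ ^ (3 : ℝ)) + 60 * ‖y‖ := by
      rw [wpsi, if_pos hy.le, hrpow]
      ring
    rw [hpsi, add_smul, wendInnerSL'_apply, mul_smul]
  · have hpsiAt : ContDiffAt ℝ 1 (fun y : E => wpsi ‖y‖) x :=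
      contDiff_one_wpsi.contDiffAt.comp x (contDiffAt_norm ℝ hx)
    exact hpsiAt.smul ((wendInnerSL' E).contDiff.contDiffAt)

end Aux

theorem wendlandC2_radial_contDiff_two (d : ℕ) (hd : 1 ≤ d) :
    ContDiff ℝ 2 (fun x : EuclideanSpace ℝ (Fin d) => wendlandC2 ‖x‖) := by
  rw [show (2 : WithTop ℕ∞) = 1 + 1 by norm_num, contDiff_succ_iff_fderiv]
  refine ⟨fun x => (hasFDerivAt_wendland_radial x).differentiableAt, by simp, ?_⟩
  have hf : (fderiv ℝ fun x : EuclideanSpace ℝ (Fin d) => wendlandC2 ‖x‖)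
      = fun x => wpsi ‖x‖ • innerSL ℝ x := by
    funext x; exact (hasFDerivAt_wendland_radial x).fderiv
  rw [hf]
  exact contDiff_one_wendland_fderiv
end

section
/- Let A ∈ ℝ^{N×n} and let λ₁ ≥ λ₂ ≥ … ≥ λ_n ≥ 0 be the eigenvalues of the symmetric positive semidefinite matrix AᵀA listed in decreasing order. Then for every integer 0 ≤ k ≤ n and every matrix B ∈ ℝ^{N×n} of rank at most k, the squared Frobenius norm of the error satisfies ‖A − B‖_F² ≥ Σ_{i=k+1}^{n} λ_i. (Optimality of the proper orthogonal decomposition / truncated singular value decomposition in the Frobenius norm: no rank-k approximation can have squared error below the sum of the squares of the discarded singular values.) -/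
open Matrix

section Aux

lemma frob_trace {N n : ℕ} (X : Matrix (Fin N) (Fin n) ℝ) :
    Matrix.trace (Xᵀ * X) = ∑ i, ∑ j, X i j ^ 2 := by
  rw [Finset.sum_comm]
  simp [Matrix.trace, Matrix.diag, Matrix.mul_apply, sq]

lemma frob_trace_nonneg {N n : ℕ} (X : Matrix (Fin N) (Fin n) ℝ) :
    0 ≤ Matrix.trace (Xᵀ * X) := by
  rw [frob_trace]
  exact Finset.sum_nonneg fun i _ => Finset.sum_nonneg fun j _ => sq_nonneg _

lemma trace_conj {N n : ℕ} (X : Matrix (Fin N) (Fin n) ℝ) (R : Matrix (Fin n) (Fin n) ℝ)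
    (hRT : Rᵀ = R) (hR2 : R * R = R) :
    Matrix.trace ((X * R)ᵀ * (X * R)) = Matrix.trace (Xᵀ * X * R) := by
  rw [Matrix.transpose_mul, hRT, Matrix.trace_mul_comm]
  simp only [← Matrix.mul_assoc]
  rw [Matrix.mul_assoc X R R, hR2, Matrix.trace_mul_comm (X * R) Xᵀ]
  simp only [← Matrix.mul_assoc]

lemma bathtub {n : ℕ} (k : ℕ) (hk : k ≤ n) (lam s : Fin n → ℝ)
    (hdec : ∀ i j : Fin n, i ≤ j → lam j ≤ lam i)
    (hnn : ∀ i, 0 ≤ lam i)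
    (hs0 : ∀ i, 0 ≤ s i) (hs1 : ∀ i, s i ≤ 1)
    (hsum : (n : ℝ) - k ≤ ∑ i, s i) :
    ∑ i ∈ Finset.univ.filter (fun i : Fin n => k ≤ (i : ℕ)), lam i ≤ ∑ i, lam i * s i := by
  by_cases hkn : k < n
  swap
  · have hempty : Finset.univ.filter (fun i : Fin n => k ≤ (i : ℕ)) = ∅ := by
      apply Finset.filter_false_of_mem
      intro i _
      have := i.isLt
      omega
    rw [hempty, Finset.sum_empty]
    exact Finset.sum_nonneg fun i _ => mul_nonneg (hnn i) (hs0 i)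
  · set c := lam ⟨k, hkn⟩ with hc
    set F := Finset.univ.filter (fun i : Fin n => k ≤ (i : ℕ)) with hF
    have hFcard : (F.card : ℝ) = (n : ℝ) - k := by
      have : F = Finset.Ici (⟨k, hkn⟩ : Fin n) := by
        ext i
        simp [hF, Fin.le_def]
      rw [this, Fin.card_Ici]
      push_cast [Nat.cast_sub hk]
      ring
    have hsplitL : ∑ i, lam i * s i
        = ∑ i ∈ F, lam i * s i + ∑ i ∈ Finset.univ.filter (fun i : Fin n => ¬ k ≤ (i : ℕ)), lam i * s i :=
      (Finset.sum_filter_add_sum_filter_not _ _ _).symm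
    have hsplitS : ∑ i, s i
        = ∑ i ∈ F, s i + ∑ i ∈ Finset.univ.filter (fun i : Fin n => ¬ k ≤ (i : ℕ)), s i :=
      (Finset.sum_filter_add_sum_filter_not _ _ _).symm
    have h1 : ∑ i ∈ F, (lam i - lam i * s i) ≤ ∑ i ∈ F, (c - c * s i) := by
      apply Finset.sum_le_sum
      intro i hi
      have hki : (⟨k, hkn⟩ : Fin n) ≤ i := by
        have := (Finset.mem_filter.mp hi).2
        simpa [Fin.le_def] using this
      have hlc : lam i ≤ c := hdec _ _ hki
      nlinarith [hs1 i, hs0 i]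
    have h2 : ∑ i ∈ F, (c - c * s i) = c * ((n : ℝ) - k) - c * ∑ i ∈ F, s i := by
      rw [Finset.sum_sub_distrib, Finset.sum_const, ← Finset.mul_sum, nsmul_eq_mul, hFcard]
      ring
    have h3 : c * ((n : ℝ) - k) - c * ∑ i ∈ F, s i
        ≤ c * ∑ i ∈ Finset.univ.filter (fun i : Fin n => ¬ k ≤ (i : ℕ)), s i := by
      have hc0 : 0 ≤ c := hnn _
      nlinarith [hsum, hsplitS]
    have h4 : c * ∑ i ∈ Finset.univ.filter (fun i : Fin n => ¬ k ≤ (i : ℕ)), s i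
        ≤ ∑ i ∈ Finset.univ.filter (fun i : Fin n => ¬ k ≤ (i : ℕ)), lam i * s i := by
      rw [Finset.mul_sum]
      apply Finset.sum_le_sum
      intro i hi
      have hik : (i : ℕ) < k := by
        have := (Finset.mem_filter.mp hi).2
        omega
      have : c ≤ lam i := hdec _ _ (by simpa [Fin.le_def] using hik.le)
      exact mul_le_mul_of_nonneg_right this (hs0 i)
    have hF1 : ∑ i ∈ F, (lam i - lam i * s i) = ∑ i ∈ F, lam i - ∑ i ∈ F, lam i * s i :=
      Finset.sum_sub_distrib _ _
    linarith

end Aux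

theorem pod_frobenius_optimality (N n : ℕ) (A : Matrix (Fin N) (Fin n) ℝ)
    (hA : (Aᵀ * A).IsHermitian)
    (lam : Fin n → ℝ) (σ : Equiv.Perm (Fin n))
    (hlam : ∀ i, lam i = hA.eigenvalues (σ i))
    (hdec : ∀ i j : Fin n, i ≤ j → lam j ≤ lam i)
    (hnonneg : ∀ i, 0 ≤ lam i)
    (k : ℕ) (hk : k ≤ n)
    (B : Matrix (Fin N) (Fin n) ℝ) (hB : B.rank ≤ k) :
    ∑ i ∈ Finset.univ.filter (fun i : Fin n => k ≤ (i : ℕ)), lam i ≤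
      ∑ i, ∑ j, (A - B) i j ^ 2 := by
  classical
  set E := A - B with hE
  -- the eigenvector matrix
  set U : Matrix (Fin n) (Fin n) ℝ := (hA.eigenvectorUnitary : Matrix (Fin n) (Fin n) ℝ) with hU
  have hstarU : star U = Uᵀ := by
    rw [Matrix.star_eq_conjTranspose, Matrix.conjTranspose_eq_transpose_of_trivial]
  have hUtU : Uᵀ * U = 1 := by
    rw [← hstarU]
    exact (Matrix.mem_unitaryGroup_iff'.mp hA.eigenvectorUnitary.2)
  have hUUt : U * Uᵀ = 1 := by
    rw [← hstarU]
    exact (Matrix.mem_unitaryGroup_iff.mp hA.eigenvectorUnitary.2)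
  -- spectral theorem
  have hspec : Aᵀ * A = U * Matrix.diagonal hA.eigenvalues * Uᵀ := by
    have := hA.spectral_theorem
    rw [Unitary.conjStarAlgAut_apply, ← hU, hstarU] at this
    simpa using this
  clear_value U
  -- kernel of B
  set f : EuclideanSpace ℝ (Fin n) →ₗ[ℝ] (Fin N → ℝ) :=
    B.mulVecLin ∘ₗ (WithLp.linearEquiv 2 ℝ (Fin n → ℝ)).toLinearMap with hf
  set K : Submodule ℝ (EuclideanSpace ℝ (Fin n)) := LinearMap.ker f with hK
  set m : ℕ := Module.finrank ℝ K with hm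
  have hrange : LinearMap.range f = LinearMap.range B.mulVecLin := by
    rw [hf, LinearMap.range_comp]
    simp
  have hrank_null : B.rank + m = n := by
    have h := LinearMap.finrank_range_add_finrank_ker f
    rw [hrange, finrank_euclideanSpace_fin] at h
    exact h
  have hnmk : (n : ℝ) ≤ (m : ℝ) + k := by
    have : n ≤ m + k := by omega
    exact_mod_cast this
  -- orthonormal basis of the kernel
  obtain ⟨bas⟩ : Nonempty (OrthonormalBasis (Fin m) ℝ K) := ⟨stdOrthonormalBasis ℝ K⟩
  set W : Matrix (Fin n) (Fin m) ℝ := fun p i => ((bas i : EuclideanSpace ℝ (Fin n)) : Fin n → ℝ) p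
    with hW
  have hWtW : Wᵀ * W = 1 := by
    ext i j
    have horth := orthonormal_iff_ite.mp bas.orthonormal i j
    rw [Submodule.coe_inner, PiLp.inner_apply] at horth
    simp only [RCLike.inner_apply, starRingEnd_apply, star_trivial] at horth
    rw [Matrix.mul_apply]
    simp only [Matrix.mul_apply, Matrix.transpose_apply, Matrix.one_apply, hW]
    rw [← horth]
    exact Finset.sum_congr rfl fun x _ => mul_comm _ _
  have hBW : B * W = 0 := by
    ext i j
    have hmem : (bas j : EuclideanSpace ℝ (Fin n)) ∈ LinearMap.ker f := hK ▸ (bas j).2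
    have h0 : f ((bas j : EuclideanSpace ℝ (Fin n))) = 0 := LinearMap.mem_ker.mp hmem
    rw [hf] at h0
    have h1 : B.mulVec ((bas j : EuclideanSpace ℝ (Fin n)) : Fin n → ℝ) = 0 := h0
    have := congrFun h1 i
    rw [Matrix.mul_apply]
    simpa [Matrix.mul_apply, Matrix.mulVec, dotProduct, hW] using this
  clear_value W
  -- projection onto the kernel
  set P : Matrix (Fin n) (Fin n) ℝ := W * Wᵀ with hP
  have hPT : Pᵀ = P := by rw [hP, Matrix.transpose_mul, Matrix.transpose_transpose]
  have hP2 : P * P = P := by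
    rw [hP]
    simp only [← Matrix.mul_assoc]
    rw [Matrix.mul_assoc W Wᵀ W, hWtW, Matrix.mul_one]
  have hBP : B * P = 0 := by rw [hP, ← Matrix.mul_assoc, hBW, Matrix.zero_mul]
  have htrP : Matrix.trace P = (m : ℝ) := by
    rw [hP, Matrix.trace_mul_comm W Wᵀ, hWtW, Matrix.trace_one, Fintype.card_fin]
  clear_value P
  -- Q
  set Q : Matrix (Fin n) (Fin n) ℝ := Uᵀ * P * U with hQ
  have hQT : Qᵀ = Q := by
    rw [hQ]
    simp [Matrix.transpose_mul, hPT, Matrix.mul_assoc]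
  have hQ2 : Q * Q = Q := by
    rw [hQ]
    simp only [← Matrix.mul_assoc]
    rw [Matrix.mul_assoc (Uᵀ * P) U Uᵀ, hUUt, Matrix.mul_one, Matrix.mul_assoc Uᵀ P P, hP2]
  clear_value Q
  have htrQ : Matrix.trace Q = (m : ℝ) := by
    rw [hQ, Matrix.trace_mul_comm (Uᵀ * P) U]
    simp only [← Matrix.mul_assoc]
    rw [hUUt, Matrix.one_mul, htrP]
  have hQdiag : ∀ p, Q p p = ∑ q, Q p q ^ 2 := by
    intro p
    have hpp := congrFun (congrFun hQ2 p) p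
    rw [Matrix.mul_apply] at hpp
    rw [← hpp]
    apply Finset.sum_congr rfl
    intro q _
    have hsymm : Q q p = Q p q := congrFun (congrFun hQT p) q
    rw [hsymm, sq]
  have hQ0 : ∀ p, 0 ≤ Q p p := by
    intro p
    rw [hQdiag p]
    exact Finset.sum_nonneg fun q _ => sq_nonneg _
  have hQ1 : ∀ p, Q p p ≤ 1 := by
    intro p
    have h := hQdiag p
    have hge : Q p p ^ 2 ≤ ∑ q, Q p q ^ 2 :=
      Finset.single_le_sum (fun q _ => sq_nonneg (Q p q)) (Finset.mem_univ p)
    rw [← h] at hge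
    nlinarith
  -- now the chain of inequalities
  have h1mPT : (1 - P)ᵀ = 1 - P := by
    rw [Matrix.transpose_sub, Matrix.transpose_one, hPT]
  have h1mP : (1 - P) * (1 - P) = 1 - P := by
    rw [Matrix.sub_mul, Matrix.mul_sub, Matrix.mul_sub, Matrix.one_mul, Matrix.mul_one, hP2]
    simp
  have step1 : Matrix.trace (Eᵀ * E * P) ≤ Matrix.trace (Eᵀ * E) := by
    have key : Matrix.trace ((E * (1 - P))ᵀ * (E * (1 - P)))
        = Matrix.trace (Eᵀ * E) - Matrix.trace (Eᵀ * E * P) := by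
      rw [trace_conj E (1 - P) h1mPT h1mP, Matrix.mul_sub, Matrix.mul_one, Matrix.trace_sub]
    have hnn := frob_trace_nonneg (E * (1 - P))
    rw [key] at hnn
    linarith
  have step2 : Matrix.trace (Eᵀ * E * P) = Matrix.trace (Aᵀ * A * P) := by
    have hEP : E * P = A * P := by
      rw [hE, Matrix.sub_mul, hBP, sub_zero]
    rw [← trace_conj E P hPT hP2, hEP, trace_conj A P hPT hP2]
  have step3 : Matrix.trace (Aᵀ * A * P) = ∑ p, hA.eigenvalues p * Q p p := by
    conv_lhs => rw [hspec]
    simp only [Matrix.mul_assoc]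
    rw [Matrix.trace_mul_comm U (Matrix.diagonal hA.eigenvalues * (Uᵀ * P))]
    simp only [← Matrix.mul_assoc]
    rw [Matrix.mul_assoc (Matrix.diagonal hA.eigenvalues * Uᵀ) P U,
      Matrix.mul_assoc (Matrix.diagonal hA.eigenvalues) Uᵀ (P * U), ← Matrix.mul_assoc Uᵀ P U,
      ← hQ]
    simp [Matrix.trace, Matrix.diag, Matrix.diagonal_mul]
  have step4 : ∑ p, hA.eigenvalues p * Q p p = ∑ i, lam i * Q (σ i) (σ i) := by
    rw [← Equiv.sum_comp σ (fun p => hA.eigenvalues p * Q p p)]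
    apply Finset.sum_congr rfl
    intro i _
    rw [hlam i]
  have hsumQ : (n : ℝ) - k ≤ ∑ i, Q (σ i) (σ i) := by
    have hcomp := Equiv.sum_comp σ (fun p => Q p p)
    have htr : ∑ p, Q p p = Matrix.trace Q := rfl
    rw [hcomp, htr, htrQ]
    linarith
  have hbath := bathtub k hk lam (fun i => Q (σ i) (σ i)) hdec hnonneg
    (fun i => hQ0 (σ i)) (fun i => hQ1 (σ i)) hsumQ
  have hfrob : ∑ i, ∑ j, (A - B) i j ^ 2 = Matrix.trace (Eᵀ * E) := (frob_trace E).symm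
  rw [hfrob]
  calc ∑ i ∈ Finset.univ.filter (fun i : Fin n => k ≤ (i : ℕ)), lam i
      ≤ ∑ i, lam i * Q (σ i) (σ i) := hbath
    _ = Matrix.trace (Aᵀ * A * P) := by rw [step3, step4]
    _ = Matrix.trace (Eᵀ * E * P) := step2.symm
    _ ≤ Matrix.trace (Eᵀ * E) := step1
end
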